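/- arXiv:1603.06405 — 5 statements merged into one kernel-verified Lean document; each statement's English description precedes it below -/
import Mathlib

section
/- Let k ≥ 1 and m ≥ 2k+2, and let W1 ≠ W2 be k-dimensional subspaces of ℝ^m. Then the following are equivalent: (i) for every k-dimensional subspace W of ℝ^m with W ∉ {W1, W2} there exists a Grassmannian symmetry g at W such that {g(W1), g(W2)} = {W1, W2}; (ii) dim(W1 ∩ W2) = k − 1. -/
/-- A *Grassmannian symmetry* at a `k`-dimensional subspace `W ⊆ ℝ^m`:
an invertible linear map `g` such that for some `λ ≠ 0`, `g w = λ • w` for all `w ∈ W`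
and `g x + λ • x ∈ W` for all `x`. -/
def GrSym (m : ℕ) (W : Submodule ℝ (Fin m → ℝ))
    (g : (Fin m → ℝ) ≃ₗ[ℝ] (Fin m → ℝ)) : Prop :=
  ∃ l : ℝ, l ≠ 0 ∧ (∀ w ∈ W, g w = l • w) ∧ ∀ x : Fin m → ℝ, g x + l • x ∈ W

/-!
A Grassmannian symmetry `g` at `W` (with scalar `λ`) that maps a subspace `A` into itself sends
`a ∈ A` to `g a + λ a ∈ W ∩ A`. Hence if `g` fixes `W₁` and `W₂`, then
`W ∩ (W₁ + W₂) ⊆ (W ∩ W₁) + (W ∩ W₂)`, and if it swaps them, then `W ∩ W₁ ⊆ W₂`.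
When `dim (W₁ ∩ W₂) ≤ k - 2`, take a hyperplane `P` of `W₁` strictly containing `W₁ ∩ W₂`,
`x₀ ∈ W₁ \ P`, `y₀ ∈ W₂ \ W₁` and `W = P + ℝ (x₀ + y₀)`: then `W ∩ W₁` and `W ∩ W₂` lie in `P`,
which violates both conditions.

Conversely, when `U = W₁ ∩ W₂` is a hyperplane of both `Wᵢ`, a reflection fixing `W` pointwise and
negating a complement `C` of `W` does the job. It preserves `Wᵢ` as soon as
`Wᵢ = (Wᵢ ∩ W) + (Wᵢ ∩ C)`, and `C` can be chosen so for both `i` unless `W ∩ Wᵢ ⊆ U` for both `i`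
while `W ∩ (W₁ + W₂) ⊄ U`. In that case some `a + b ∈ W` has `a ∈ W₁ \ U`, `b ∈ W₂ \ U`, and a
reflection with `a - b ∈ C` and `U = (U ∩ W) + (U ∩ C)` swaps `a` and `b`, hence `W₁` and `W₂`.
-/

open Module Submodule

section Lattice

variable {α : Type*} [Lattice α] [BoundedOrder α] [IsModularLattice α]

theorem inf_le_of_disjoint_sup {p l a : α} (h : Disjoint l (p ⊔ a)) : (p ⊔ l) ⊓ a ≤ p :=
  calc (p ⊔ l) ⊓ a ≤ (p ⊔ l) ⊓ (p ⊔ a) := inf_le_inf_left _ le_sup_right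
    _ = p ⊔ l ⊓ (p ⊔ a) := sup_inf_assoc_of_le l le_sup_left
    _ = p := by rw [h.eq_bot, sup_bot_eq]

variable [ComplementedLattice α]

theorem exists_disjoint_le_inf_sup (a b : α) : ∃ d, Disjoint d b ∧ a ≤ (a ⊓ b) ⊔ d := by
  obtain ⟨d, hd, hsup⟩ := IsModularLattice.exists_disjoint_and_sup_eq (inf_le_left : a ⊓ b ≤ a)
  have hda : d ≤ a := hsup ▸ le_sup_right
  refine ⟨d, disjoint_iff_inf_le.mpr ?_, hsup.ge⟩
  calc d ⊓ b ≤ (a ⊓ b) ⊓ d := le_inf (inf_le_inf_right b hda) inf_le_left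
    _ ≤ ⊥ := hd.le_bot

theorem exists_le_disjoint_sup_eq {q l c : α} (hqc : q ≤ c) (hlc : l ≤ c) (hql : Disjoint q l) :
    ∃ p, q ≤ p ∧ Disjoint p l ∧ p ⊔ l = c := by
  obtain ⟨p, hinf, hsup⟩ :=
    IsModularLattice.exists_inf_eq_and_sup_eq (le_sup_left : q ≤ q ⊔ l) (sup_le hqc hlc)
  have hqp : q ≤ p := hinf ▸ inf_le_right
  refine ⟨p, hqp, disjoint_iff_inf_le.mpr ?_, ?_⟩
  · calc p ⊓ l ≤ q ⊓ l :=
          le_inf (hinf ▸ le_inf (inf_le_right.trans le_sup_right) inf_le_left) inf_le_right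
      _ ≤ ⊥ := hql.le_bot
  · rw [← hsup, sup_right_comm, sup_eq_right.mpr hqp, sup_comm]

end Lattice

section Reflection

variable {K V : Type*} [DivisionRing K] [AddCommGroup V] [Module K V]

theorem exists_linearEquiv_eq_self_and_eq_neg {D W : Submodule K V} (hD : Disjoint D W) :
    ∃ g : V ≃ₗ[K] V, (∀ w ∈ W, g w = w) ∧ (∀ d ∈ D, g d = -d) ∧ ∀ x, g x + x ∈ W := by
  obtain ⟨C, hDC, hC⟩ := hD.exists_isCompl
  let f := LinearMap.ofIsCompl hC.symm W.subtype (-C.subtype)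
  have hfW : ∀ w ∈ W, f w = w := fun w hw => LinearMap.ofIsCompl_apply_left hC.symm ⟨w, hw⟩
  have hfC : ∀ c ∈ C, f c = -c := fun c hc => LinearMap.ofIsCompl_apply_right hC.symm ⟨c, hc⟩
  have hsplit : ∀ x, ∃ w ∈ W, ∃ c ∈ C, w + c = x := fun x =>
    mem_sup.mp (hC.symm.sup_eq_top ▸ mem_top)
  have hf : Function.Involutive f := by
    intro x
    obtain ⟨w, hw, c, hc, rfl⟩ := hsplit x
    rw [map_add, hfW w hw, hfC c hc, map_add, hfW w hw, map_neg, hfC c hc, neg_neg]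
  refine ⟨LinearEquiv.ofInvolutive f hf, hfW, fun d hd => hfC d (hDC hd), fun x => ?_⟩
  obtain ⟨w, hw, c, hc, rfl⟩ := hsplit x
  change f (w + c) + (w + c) ∈ W
  rw [map_add, hfW w hw, hfC c hc]
  convert W.add_mem hw hw using 1
  abel

end Reflection

theorem map_eq_self_of_le_inf_sup {R V : Type*} [Ring R] [AddCommGroup V] [Module R V]
    {g : V ≃ₗ[R] V} {W D A : Submodule R V} (hW : ∀ w ∈ W, g w = w) (hD : ∀ d ∈ D, g d = -d)
    (hA : A ≤ (A ⊓ W) ⊔ D) : A.map g.toLinearMap = A := by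
  have hsplit : ∀ x ∈ A, ∃ w ∈ A ⊓ W, ∃ d ∈ A ⊓ D, w + d = x := by
    intro x hx
    obtain ⟨w, hw, d, hd, rfl⟩ := mem_sup.mp (hA hx)
    exact ⟨w, hw, d, ⟨by simpa using A.sub_mem hx hw.1, hd⟩, rfl⟩
  apply le_antisymm
  · rintro _ ⟨x, hx, rfl⟩
    obtain ⟨w, hw, d, hd, rfl⟩ := hsplit x hx
    simp only [LinearEquiv.coe_coe, map_add, hW w hw.2, hD d hd.2]
    exact A.add_mem hw.1 (A.neg_mem hd.1)
  · intro x hx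
    obtain ⟨w, hw, d, hd, rfl⟩ := hsplit x hx
    refine ⟨w - d, A.sub_mem hw.1 hd.1, ?_⟩
    simp only [LinearEquiv.coe_coe, map_sub, hW w hw.2, hD d hd.2, sub_neg_eq_add]

section FiniteDimensional

variable {K V : Type*} [DivisionRing K] [AddCommGroup V] [Module K V] [FiniteDimensional K V]

theorem sup_span_singleton_eq_of_finrank_eq_add_one {U A : Submodule K V} {a : V} (hUA : U ≤ A)
    (hrank : finrank K A = finrank K U + 1) (ha : a ∈ A) (haU : a ∉ U) : U ⊔ K ∙ a = A :=
  eq_of_le_of_finrank_eq (sup_le hUA ((span_singleton_le_iff_mem a A).mpr ha))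
    (by rw [finrank_sup_span_singleton haU, hrank])

theorem le_inf_sup_of_finrank_eq_add_one {U A W : Submodule K V} (hUA : U ≤ A)
    (hrank : finrank K A = finrank K U + 1) (hAW : ¬ A ⊓ W ≤ U) : A ≤ (A ⊓ W) ⊔ U := by
  obtain ⟨a, ha, haU⟩ := SetLike.not_le_iff_exists.mp hAW
  calc A = U ⊔ K ∙ a := (sup_span_singleton_eq_of_finrank_eq_add_one hUA hrank ha.1 haU).symm
    _ ≤ (A ⊓ W) ⊔ U :=
      sup_le le_sup_right (le_sup_of_le_left ((span_singleton_le_iff_mem a _).mpr ha))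

theorem exists_lt_sup_span_singleton_eq {U A : Submodule K V} (hUA : U ≤ A)
    (h : finrank K U + 2 ≤ finrank K A) :
    ∃ P : Submodule K V, ∃ x, U < P ∧ x ∉ P ∧ P ⊔ K ∙ x = A := by
  obtain ⟨x1, hx1A, hx1U⟩ := SetLike.exists_of_lt (hUA.lt_of_ne (by rintro rfl; omega))
  have hQA : U ⊔ K ∙ x1 ≤ A := sup_le hUA ((span_singleton_le_iff_mem x1 A).mpr hx1A)
  obtain ⟨x0, hx0A, hx0Q⟩ := SetLike.exists_of_lt (hQA.lt_of_ne fun hQ => by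
    rw [← hQ, finrank_sup_span_singleton hx1U] at h; omega)
  have hx0 : x0 ≠ 0 := fun h => hx0Q (h ▸ zero_mem _)
  obtain ⟨P, hQP, hPx0, hP⟩ := exists_le_disjoint_sup_eq hQA
    ((span_singleton_le_iff_mem x0 A).mpr hx0A) ((disjoint_span_singleton' hx0).mpr hx0Q)
  refine ⟨P, x0, (left_lt_sup.mpr ?_).trans_le hQP, (disjoint_span_singleton' hx0).mp hPx0, hP⟩
  rwa [span_singleton_le_iff_mem]

theorem exists_not_inf_le_of_finrank_inf_add_two_le {W1 W2 : Submodule K V}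
    (h : finrank K ↥(W1 ⊓ W2) + 2 ≤ finrank K W1) (h21 : ¬ W2 ≤ W1) :
    ∃ W : Submodule K V, finrank K W = finrank K W1 ∧ W ≠ W1 ∧ ¬ W ⊓ W1 ≤ W2 ∧
      ¬ W ⊓ (W1 ⊔ W2) ≤ (W ⊓ W1) ⊔ (W ⊓ W2) := by
  obtain ⟨P, x0, hUP, hx0P, hP⟩ := exists_lt_sup_span_singleton_eq inf_le_left h
  obtain ⟨x1, hx1P, hx1U⟩ := SetLike.exists_of_lt hUP
  obtain ⟨y0, hy0, hy0W1⟩ := SetLike.not_le_iff_exists.mp h21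
  have hPW1 : P ≤ W1 := hP ▸ le_sup_left
  have hx0 : x0 ∈ W1 := hP ▸ mem_sup_right (mem_span_singleton_self x0)
  set v := x0 + y0
  have hvW1 : v ∉ W1 := fun hv => hy0W1 (by simpa [v] using W1.sub_mem hv hx0)
  have hvPW2 : v ∉ P ⊔ W2 := by
    intro hv
    have : x0 ∈ (P ⊔ W2) ⊓ W1 :=
      ⟨by simpa [v] using (P ⊔ W2).sub_mem hv (mem_sup_right hy0), hx0⟩
    rw [sup_inf_assoc_of_le W2 hPW1, inf_comm, sup_eq_left.mpr hUP.le] at this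
    exact hx0P this
  have hv0 : v ≠ 0 := fun h => hvW1 (h ▸ zero_mem _)
  have hinf : ∀ A, v ∉ P ⊔ A → (P ⊔ K ∙ v) ⊓ A ≤ P := fun A hA =>
    inf_le_of_disjoint_sup ((disjoint_span_singleton' hv0).mpr hA).symm
  have hvW : v ∈ P ⊔ K ∙ v := mem_sup_right (mem_span_singleton_self v)
  refine ⟨P ⊔ K ∙ v, ?_, fun h => hvW1 (h ▸ hvW), fun h => hx1U ?_, fun h => hvW1 (hPW1 ?_)⟩
  · rw [finrank_sup_span_singleton fun h => hvW1 (hPW1 h), ← hP, finrank_sup_span_singleton hx0P]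
  · exact ⟨hPW1 hx1P, h ⟨mem_sup_left hx1P, hPW1 hx1P⟩⟩
  · refine sup_le (hinf W1 ?_) (hinf W2 hvPW2) (h ⟨hvW, add_mem_sup hx0 hy0⟩)
    rwa [sup_eq_right.mpr hPW1]

end FiniteDimensional

section Grassmannian

variable {m : ℕ} {W W1 W2 : Submodule ℝ (Fin m → ℝ)} {g : (Fin m → ℝ) ≃ₗ[ℝ] (Fin m → ℝ)}

theorem GrSym.inf_le_of_map_le (hg : GrSym m W g) (h : W1.map g.toLinearMap ≤ W2) :
    W ⊓ W1 ≤ W2 := by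
  obtain ⟨l, hl, hgW, -⟩ := hg
  rintro x ⟨hxW, hx⟩
  have : l • x ∈ W2 := hgW x hxW ▸ h (mem_map_of_mem hx)
  exact (W2.smul_mem_iff hl).mp this

theorem GrSym.inf_sup_le (hg : GrSym m W g) (h1 : W1.map g.toLinearMap ≤ W1)
    (h2 : W2.map g.toLinearMap ≤ W2) : W ⊓ (W1 ⊔ W2) ≤ (W ⊓ W1) ⊔ (W ⊓ W2) := by
  obtain ⟨l, hl, hgW, hgadd⟩ := hg
  have hmem : ∀ A : Submodule ℝ (Fin m → ℝ), A.map g.toLinearMap ≤ A →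
      ∀ a ∈ A, g a + l • a ∈ W ⊓ A := fun A hA a ha =>
    ⟨hgadd a, A.add_mem (hA (mem_map_of_mem ha)) (A.smul_mem l ha)⟩
  rintro _ ⟨hxW, hx⟩
  obtain ⟨a, ha, b, hb, rfl⟩ := mem_sup.mp hx
  have hsum : (g a + l • a) + (g b + l • b) = (2 * l) • (a + b) := by
    rw [add_add_add_comm, ← map_add, hgW _ hxW]
    module
  rw [← smul_mem_iff _ (mul_ne_zero two_ne_zero hl), ← hsum]
  exact add_mem_sup (hmem W1 h1 a ha) (hmem W2 h2 b hb)

theorem exists_grSym_of_disjoint {D : Submodule ℝ (Fin m → ℝ)} (hD : Disjoint D W) :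
    ∃ g, GrSym m W g ∧ (∀ w ∈ W, g w = w) ∧ ∀ d ∈ D, g d = -d := by
  obtain ⟨g, hgW, hgD, hadd⟩ := exists_linearEquiv_eq_self_and_eq_neg hD
  exact ⟨g, ⟨1, one_ne_zero, by simpa using hgW, by simpa using hadd⟩, hgW, hgD⟩

theorem exists_grSym_map_eq_self (A : Submodule ℝ (Fin m → ℝ)) (hA1 : A ⊓ W ≤ W1)
    (hA2 : A ⊓ W ≤ W2) (h1 : W1 ≤ (W1 ⊓ W) ⊔ A) (h2 : W2 ≤ (W2 ⊓ W) ⊔ A) :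
    ∃ g, GrSym m W g ∧ W1.map g.toLinearMap = W1 ∧ W2.map g.toLinearMap = W2 := by
  obtain ⟨D, hDW, hAD⟩ := exists_disjoint_le_inf_sup A W
  obtain ⟨g, hg, hgW, hgD⟩ := exists_grSym_of_disjoint hDW
  have key : ∀ B, A ⊓ W ≤ B → B ≤ (B ⊓ W) ⊔ A → B ≤ (B ⊓ W) ⊔ D := fun B hAB hB =>
    hB.trans (sup_le le_sup_left (hAD.trans (sup_le_sup_right (le_inf hAB inf_le_right) D)))
  exact ⟨g, hg, map_eq_self_of_le_inf_sup hgW hgD (key W1 hA1 h1),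
    map_eq_self_of_le_inf_sup hgW hgD (key W2 hA2 h2)⟩

theorem exists_grSym_map_eq_swap (h1 : finrank ℝ W1 = finrank ℝ ↥(W1 ⊓ W2) + 1)
    (h2 : finrank ℝ W2 = finrank ℝ ↥(W1 ⊓ W2) + 1)
    (hW1 : W1 ⊓ W ≤ W1 ⊓ W2) (hW2 : W2 ⊓ W ≤ W1 ⊓ W2) {a b : Fin m → ℝ} (ha : a ∈ W1)
    (hb : b ∈ W2) (hab : a + b ∈ W) (habU : a + b ∉ W1 ⊓ W2) :
    ∃ g, GrSym m W g ∧ W1.map g.toLinearMap = W2 ∧ W2.map g.toLinearMap = W1 := by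
  set U := W1 ⊓ W2
  have haU : a ∉ U := fun h => habU (hW2 ⟨W2.add_mem (mem_inf.mp h).2 hb, hab⟩)
  have hbU : b ∉ U := fun h => habU (hW1 ⟨W1.add_mem ha (mem_inf.mp h).1, hab⟩)
  obtain ⟨E, hUE, hEsup⟩ := IsModularLattice.exists_disjoint_and_sup_eq (inf_le_left : U ⊓ W ≤ U)
  have hEU : E ≤ U := hEsup ▸ le_sup_right
  have hD : Disjoint (E ⊔ ℝ ∙ (a - b)) W := by
    rw [disjoint_iff_inf_le]
    rintro _ ⟨hx, hxW⟩
    obtain ⟨e, he, _, hs, rfl⟩ := mem_sup.mp hx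
    obtain ⟨t, rfl⟩ := mem_span_singleton.mp hs
    have h2t : (2 * t) • a ∈ U := by
      have hW : e + (2 * t) • a ∈ W := by
        rw [show e + (2 * t) • a = e + t • (a - b) + t • (a + b) by module]
        exact W.add_mem hxW (W.smul_mem t hab)
      have : e + (2 * t) • a ∈ U :=
        hW1 ⟨W1.add_mem (mem_inf.mp (hEU he)).1 (W1.smul_mem _ ha), hW⟩
      simpa using U.sub_mem this (hEU he)
    obtain rfl : t = 0 := by
      by_contra ht
      exact haU ((U.smul_mem_iff (mul_ne_zero two_ne_zero ht)).mp h2t)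
    rw [zero_smul, add_zero] at hxW ⊢
    exact hUE.le_bot ⟨⟨hEU he, hxW⟩, he⟩
  obtain ⟨g, hg, hgW, hgD⟩ := exists_grSym_of_disjoint hD
  have hfix := hgW _ hab
  have hneg := hgD _ (mem_sup_right (mem_span_singleton_self (a - b)))
  rw [map_add] at hfix
  rw [map_sub] at hneg
  have hga : g a = b := smul_right_injective _ (two_ne_zero (α := ℝ)) <|
    show (2 : ℝ) • g a = (2 : ℝ) • b by linear_combination (norm := module) hfix + hneg
  have hgb : g b = a := smul_right_injective _ (two_ne_zero (α := ℝ)) <|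
    show (2 : ℝ) • g b = (2 : ℝ) • a by linear_combination (norm := module) hfix - hneg
  have hgU : U.map g.toLinearMap = U :=
    map_eq_self_of_le_inf_sup hgW hgD (hEsup.ge.trans (sup_le_sup_left le_sup_left _))
  have hW1' : U ⊔ ℝ ∙ a = W1 := sup_span_singleton_eq_of_finrank_eq_add_one inf_le_left h1 ha haU
  have hW2' : U ⊔ ℝ ∙ b = W2 := sup_span_singleton_eq_of_finrank_eq_add_one inf_le_right h2 hb hbU
  refine ⟨g, hg, ?_, ?_⟩
  · rw [← hW1', Submodule.map_sup, hgU, map_span, Set.image_singleton, LinearEquiv.coe_coe, hga,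
      hW2']
  · rw [← hW2', Submodule.map_sup, hgU, map_span, Set.image_singleton, LinearEquiv.coe_coe, hgb,
      hW1']

theorem exists_grSym_of_finrank_eq_finrank_inf_add_one
    (h1 : finrank ℝ W1 = finrank ℝ ↥(W1 ⊓ W2) + 1) (h2 : finrank ℝ W2 = finrank ℝ ↥(W1 ⊓ W2) + 1)
    (W : Submodule ℝ (Fin m → ℝ)) :
    ∃ g, GrSym m W g ∧ ((W1.map g.toLinearMap = W1 ∧ W2.map g.toLinearMap = W2) ∨
      (W1.map g.toLinearMap = W2 ∧ W2.map g.toLinearMap = W1)) := by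
  by_cases hW1 : W1 ⊓ W ≤ W1 ⊓ W2 <;> by_cases hW2 : W2 ⊓ W ≤ W1 ⊓ W2
  · by_cases hS : W ⊓ (W1 ⊔ W2) ≤ W1 ⊓ W2
    · refine (exists_grSym_map_eq_self (W1 ⊔ W2) ?_ ?_ ?_ ?_).imp fun _ ⟨hg, h⟩ => ⟨hg, .inl h⟩
      · exact inf_comm (W1 ⊔ W2) W ▸ hS.trans inf_le_left
      · exact inf_comm (W1 ⊔ W2) W ▸ hS.trans inf_le_right
      · exact le_sup_left.trans le_sup_right
      · exact le_sup_right.trans le_sup_right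
    · obtain ⟨_, ⟨hxW, hx⟩, hxU⟩ := SetLike.not_le_iff_exists.mp hS
      obtain ⟨a, ha, b, hb, rfl⟩ := mem_sup.mp hx
      exact (exists_grSym_map_eq_swap h1 h2 hW1 hW2 ha hb hxW hxU).imp
        fun _ ⟨hg, h⟩ => ⟨hg, .inr h⟩
  · refine (exists_grSym_map_eq_self W1 inf_le_left (hW1.trans inf_le_right) le_sup_right
      ?_).imp fun _ ⟨hg, h⟩ => ⟨hg, .inl h⟩
    exact (le_inf_sup_of_finrank_eq_add_one inf_le_right h2 hW2).trans
      (sup_le_sup_left inf_le_left _)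
  · refine (exists_grSym_map_eq_self W2 (hW2.trans inf_le_left) inf_le_left ?_
      le_sup_right).imp fun _ ⟨hg, h⟩ => ⟨hg, .inl h⟩
    exact (le_inf_sup_of_finrank_eq_add_one inf_le_left h1 hW1).trans
      (sup_le_sup_left inf_le_right _)
  · exact (exists_grSym_map_eq_self (W1 ⊓ W2) (inf_le_left.trans inf_le_left)
      (inf_le_left.trans inf_le_right) (le_inf_sup_of_finrank_eq_add_one inf_le_left h1 hW1)
      (le_inf_sup_of_finrank_eq_add_one inf_le_right h2 hW2)).imp fun _ ⟨hg, h⟩ => ⟨hg, .inl h⟩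

end Grassmannian

theorem stmt0_general (k m : ℕ)
    (W1 W2 : Submodule ℝ (Fin m → ℝ))
    (hW1 : Module.finrank ℝ W1 = k) (hW2 : Module.finrank ℝ W2 = k)
    (hne : W1 ≠ W2) :
    (∀ W : Submodule ℝ (Fin m → ℝ), Module.finrank ℝ W = k → W ≠ W1 → W ≠ W2 →
        ∃ g : (Fin m → ℝ) ≃ₗ[ℝ] (Fin m → ℝ), GrSym m W g ∧
          ((W1.map g.toLinearMap = W1 ∧ W2.map g.toLinearMap = W2) ∨ (W1.map g.toLinearMap = W2 ∧ W2.map g.toLinearMap = W1)))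
      ↔ Module.finrank ℝ ↥(W1 ⊓ W2) = k - 1 := by
  have hlt : finrank ℝ ↥(W1 ⊓ W2) < k := hW1 ▸ finrank_lt_finrank_of_lt (inf_le_left.lt_of_ne
    fun h => hne (eq_of_le_of_finrank_eq (inf_eq_left.mp h) (hW1.trans hW2.symm)))
  constructor
  · intro hsym
    by_contra hd
    have h21 : ¬ W2 ≤ W1 := fun h => hne (eq_of_le_of_finrank_eq h (hW2.trans hW1.symm)).symm
    obtain ⟨W, hW, hWW1, hW12, hWS⟩ := exists_not_inf_le_of_finrank_inf_add_two_le (by omega) h21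
    obtain ⟨g, hg, hfix | hswap⟩ :=
      hsym W (hW.trans hW1) hWW1 fun h => hW12 (inf_le_left.trans h.le)
    · exact hWS (hg.inf_sup_le hfix.1.le hfix.2.le)
    · exact hW12 (hg.inf_le_of_map_le hswap.1.le)
  · intro hd W _ _ _
    exact exists_grSym_of_finrank_eq_finrank_inf_add_one (by omega) (by omega) W

theorem stmt0 (k m : ℕ) (hk : 1 ≤ k) (hm : 2 * k + 2 ≤ m)
    (W1 W2 : Submodule ℝ (Fin m → ℝ))
    (hW1 : Module.finrank ℝ W1 = k) (hW2 : Module.finrank ℝ W2 = k)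
    (hne : W1 ≠ W2) :
    (∀ W : Submodule ℝ (Fin m → ℝ), Module.finrank ℝ W = k → W ≠ W1 → W ≠ W2 →
        ∃ g : (Fin m → ℝ) ≃ₗ[ℝ] (Fin m → ℝ), GrSym m W g ∧
          ((W1.map g.toLinearMap = W1 ∧ W2.map g.toLinearMap = W2) ∨ (W1.map g.toLinearMap = W2 ∧ W2.map g.toLinearMap = W1)))
      ↔ Module.finrank ℝ ↥(W1 ⊓ W2) = k - 1 :=
  stmt0_general k m W1 W2 hW1 hW2 hne
end

section
/- Let m ≥ 2 and let W1 ≠ W2 be Lagrangian subspaces of ℝ^{2m} with its standard symplectic form Ω. Then the following are equivalent: (i) for every Lagrangian subspace W of ℝ^{2m} with W ∉ {W1, W2} there exists a Lagrangian symmetry g at W such that {g(W1), g(W2)} = {W1, W2}; (ii) dim(W1 ∩ W2) = m − 1. -/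
/-- The standard symplectic form on `ℝ^{2m}`:
`Ω(x,y) = Σ_{i=1}^m (x_i y_{m+i} − x_{m+i} y_i)`. -/
def Omega (m : ℕ) (x y : Fin (2 * m) → ℝ) : ℝ :=
  ∑ i : Fin m,
    (x ⟨i.1, by have := i.2; omega⟩ * y ⟨m + i.1, by have := i.2; omega⟩ -
      x ⟨m + i.1, by have := i.2; omega⟩ * y ⟨i.1, by have := i.2; omega⟩)

/-- A subspace of `ℝ^{2m}` is Lagrangian if it has dimension `m` and `Ω` vanishes on it. -/
def IsLagrangian (m : ℕ) (W : Submodule ℝ (Fin (2 * m) → ℝ)) : Prop :=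
  Module.finrank ℝ W = m ∧ ∀ x ∈ W, ∀ y ∈ W, Omega m x y = 0

/-- A *Lagrangian symmetry* at a Lagrangian subspace `W ⊆ ℝ^{2m}`:
an invertible linear map `g` such that for some `c ≠ 0`, `g w = c • w` for all `w ∈ W`
and `Ω(g x, g y) = −c² Ω(x, y)` for all `x, y`. -/
def LagSym (m : ℕ) (W : Submodule ℝ (Fin (2 * m) → ℝ))
    (g : (Fin (2 * m) → ℝ) ≃ₗ[ℝ] (Fin (2 * m) → ℝ)) : Prop :=
  ∃ c : ℝ, c ≠ 0 ∧ (∀ w ∈ W, g w = c • w) ∧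
    ∀ x y : Fin (2 * m) → ℝ, Omega m (g x) (g y) = -c ^ 2 * Omega m x y


/-!
Everything is proved for a nondegenerate alternating form `B` on a finite-dimensional space over a
field of characteristic `≠ 2`, with Lagrangians encoded as the subspaces `L` with `Lᗮ = L`;
write `U = W₁ ⊓ W₂`.

If `U` has codimension one in `W₁`, take a Lagrangian complement `W'` of `W` and the reflection `g`
fixing `W` and negating `W'`: it is a Lagrangian symmetry at `W` with `c = 1`. When `W` meets `W₁`
or `W₂` outside `U`, `W'` can be chosen so that `W₁` and `W₂` both split along `W ⊕ W'`, and `g`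
fixes them. Otherwise `W₁ ≤ (W ⊓ W₂)ᗮ = W ⊔ W₂`, so some `v₁ ∈ W₁ \ U` is `w + v₂` with `w ∈ W`,
`v₂ ∈ W₂`; choosing `W' ∋ v₁ + v₂` makes `g` send `v₁` to `-v₂`, and so exchange `W₁` and `W₂`.

Conversely, a Lagrangian symmetry `g` at `W` satisfies `g² = c²`, its `±c`-eigenspaces are
isotropic, and the `c`-eigenspace is `W`. Pick `a ∈ W₁ \ W₂` and a Lagrangian `W` with
`W ⊓ W₁ = K a` and `W ⊓ W₂ = ⊥` (namely `W = K a ⊕ (L ⊓ aᗮ)` for a Lagrangian `L` transverse to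
`W₁` and to `K a ⊕ (W₂ ⊓ aᗮ)`). No `g` at `W` can exchange `W₁` and `W₂`, since `c • a ∉ W₂`. If
`g` fixes both, then `W₂` is the `-c`-eigenspace and `W₁ = K a ⊕ U`, so `dim U = m - 1`.
-/

open Module Submodule

theorem exists_le_le_disjoint_sup_eq {α : Type*} [Lattice α] [BoundedOrder α] [IsModularLattice α]
    [ComplementedLattice α] {a c s : α} (ha : a ≤ s) (hc : c ≤ s) (hac : Disjoint a c) :
    ∃ t, c ≤ t ∧ t ≤ s ∧ Disjoint a t ∧ a ⊔ t = s := by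
  obtain ⟨u, hu⟩ := exists_isCompl (⟨a ⊔ c, sup_le ha hc⟩ : Set.Iic s)
  refine ⟨c ⊔ u, le_sup_left, sup_le hc u.2, hac.disjoint_sup_right_of_disjoint_sup_left ?_, ?_⟩
  · simpa [disjoint_iff, ← Subtype.coe_inj] using hu.disjoint
  · have := congrArg Subtype.val hu.codisjoint.eq_top
    simpa [← sup_assoc] using this

namespace Submodule

section Ring

variable {R M : Type*} [Ring R] [AddCommGroup M] [Module R M]

theorem exists_mem_notMem_notMem {S A C : Submodule R M} (hA : ¬S ≤ A) (hC : ¬S ≤ C) :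
    ∃ v ∈ S, v ∉ A ∧ v ∉ C := by
  obtain ⟨x, hxS, hxA⟩ := SetLike.not_le_iff_exists.mp hA
  obtain ⟨y, hyS, hyC⟩ := SetLike.not_le_iff_exists.mp hC
  by_cases hxC : x ∈ C
  · by_cases hyA : y ∈ A
    · exact ⟨x + y, S.add_mem hxS hyS, fun h => hxA ((A.add_mem_iff_left hyA).mp h),
        fun h => hyC ((C.add_mem_iff_right hxC).mp h)⟩
    · exact ⟨y, hyS, hyA, hyC⟩
  · exact ⟨x, hxS, hxA, hxC⟩

end Ring

variable {K V : Type*} [Field K] [AddCommGroup V] [Module K V]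

theorem sup_eq_of_finrank_le_succ [FiniteDimensional K V] {U A S : Submodule K V}
    (hU : U ≤ S) (hA : A ≤ S) (hAU : ¬A ≤ U) (h : finrank K S ≤ finrank K U + 1) : U ⊔ A = S := by
  refine eq_of_le_of_finrank_le (sup_le hU hA) ?_
  have : finrank K U < finrank K ↥(U ⊔ A) :=
    finrank_lt_finrank_of_lt (lt_of_le_of_ne le_sup_left fun h => hAU (h ▸ le_sup_right))
  omega

theorem disjoint_sup_span_singleton {T L : Submodule K V} {v : V} (hTL : Disjoint T L)
    (hv : v ∉ T ⊔ L) : Disjoint (T ⊔ K ∙ v) L := by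
  rw [disjoint_def]
  intro x hx hxL
  obtain ⟨t, ht, w, hw, rfl⟩ := mem_sup.mp hx
  obtain ⟨c, rfl⟩ := mem_span_singleton.mp hw
  by_cases hc : c = 0
  · subst hc
    rw [zero_smul, add_zero] at hxL ⊢
    exact disjoint_def.mp hTL t ht hxL
  · refine absurd ?_ hv
    have : c • v ∈ T ⊔ L := by
      simpa using (T ⊔ L).sub_mem (mem_sup_right hxL) (mem_sup_left ht)
    exact (smul_mem_iff _ hc).mp this

theorem map_eq_self_of_forall_eq_smul {g : V →ₗ[K] V} {S : Submodule K V} {t : K} (ht : t ≠ 0)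
    (h : ∀ x ∈ S, g x = t • x) : S.map g = S := by
  refine le_antisymm ?_ fun x hx => ⟨t⁻¹ • x, S.smul_mem _ hx, ?_⟩
  · rintro _ ⟨x, hx, rfl⟩
    rw [h x hx]
    exact S.smul_mem t hx
  · rw [h _ (S.smul_mem _ hx), smul_smul, mul_inv_cancel₀ ht, one_smul]

noncomputable def reflectionOfIsCompl {p q : Submodule K V} (h : IsCompl p q) : V ≃ₗ[K] V :=
  (prodEquivOfIsCompl p q h).symm ≪≫ₗ (LinearEquiv.refl K p).prodCongr (LinearEquiv.neg K) ≪≫ₗ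
    prodEquivOfIsCompl p q h

variable {p q : Submodule K V} (h : IsCompl p q)

theorem reflectionOfIsCompl_apply_of_mem_left {x : V} (hx : x ∈ p) :
    reflectionOfIsCompl h x = x := by
  simp [reflectionOfIsCompl, projection_apply_of_mem_left h hx, hx]

theorem reflectionOfIsCompl_apply_of_mem_right {x : V} (hx : x ∈ q) :
    reflectionOfIsCompl h x = -x := by
  simp [reflectionOfIsCompl, projection_apply_of_mem_left h.symm hx, hx]

theorem map_reflectionOfIsCompl_eq {S : Submodule K V} (hS : S ≤ S ⊓ p ⊔ S ⊓ q) :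
    S.map (reflectionOfIsCompl h).toLinearMap = S := by
  have hsplit := le_antisymm hS (sup_le inf_le_left inf_le_left)
  conv_lhs => rw [hsplit, map_sup]
  rw [map_eq_self_of_forall_eq_smul one_ne_zero fun x hx => ?_,
    map_eq_self_of_forall_eq_smul (neg_ne_zero.mpr one_ne_zero) fun x hx => ?_, ← hsplit]
  · rw [neg_one_smul]
    exact reflectionOfIsCompl_apply_of_mem_right h hx.2
  · rw [one_smul]
    exact reflectionOfIsCompl_apply_of_mem_left h hx.2

theorem map_reflectionOfIsCompl_sup_span_singleton [NeZero (2 : K)] {U : Submodule K V}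
    (hU : U ≤ U ⊓ p ⊔ U ⊓ q) {v₁ v₂ : V} (hp : v₁ - v₂ ∈ p) (hq : v₁ + v₂ ∈ q) :
    (U ⊔ K ∙ v₁).map (reflectionOfIsCompl h).toLinearMap = U ⊔ K ∙ v₂ := by
  have hv : reflectionOfIsCompl h v₁ = -v₂ := by
    refine smul_right_injective V (two_ne_zero : (2 : K) ≠ 0) ?_
    have e : (2 : K) • v₁ = (v₁ - v₂) + (v₁ + v₂) := by rw [two_smul]; abel
    simp only [← map_smul, e, map_add, reflectionOfIsCompl_apply_of_mem_left h hp,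
      reflectionOfIsCompl_apply_of_mem_right h hq, smul_neg, two_smul]
    abel
  rw [map_sup, map_reflectionOfIsCompl_eq h hU, map_span, Set.image_singleton,
    LinearEquiv.coe_coe, hv, ← Set.neg_singleton, span_neg]

end Submodule

namespace Module.End

open Submodule

variable {K V : Type*} [Field K] [NeZero (2 : K)] [AddCommGroup V] [Module K V]

theorem le_inf_eigenspace_sup_inf_eigenspace {f : Module.End K V} {c : K} (hc : c ≠ 0)
    (hf : ∀ x, f (f x) = c ^ 2 • x) {S : Submodule K V} (hS : ∀ x ∈ S, f x ∈ S) :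
    S ≤ S ⊓ eigenspace f c ⊔ S ⊓ eigenspace f (-c) := by
  intro x hx
  have h2c : (2 * c) ≠ 0 := mul_ne_zero two_ne_zero hc
  have hdecomp : x = (2 * c)⁻¹ • (f x + c • x) + (2 * c)⁻¹ • (c • x - f x) := by
    rw [← smul_add, show f x + c • x + (c • x - f x) = (2 * c) • x by module, smul_smul,
      inv_mul_cancel₀ h2c, one_smul]
  rw [hdecomp]
  refine add_mem
    (mem_sup_left (mem_inf.mpr ⟨S.smul_mem _ (S.add_mem (hS x hx) (S.smul_mem c hx)), ?_⟩))
    (mem_sup_right (mem_inf.mpr ⟨S.smul_mem _ (S.sub_mem (S.smul_mem c hx) (hS x hx)), ?_⟩))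
  · rw [mem_eigenspace_iff, map_smul, map_add, map_smul, hf]
    module
  · rw [mem_eigenspace_iff, map_smul, map_sub, map_smul, hf]
    module

end Module.End

namespace LinearMap.BilinForm

open Module.End

variable {K V : Type*} [Field K] [AddCommGroup V] [Module K V] {B : LinearMap.BilinForm K V}

theorem orthogonal_sup (A C : Submodule K V) :
    B.orthogonal (A ⊔ C) = B.orthogonal A ⊓ B.orthogonal C := by
  refine le_antisymm (le_inf (orthogonal_le le_sup_left) (orthogonal_le le_sup_right)) ?_
  rintro x ⟨hA, hC⟩ y hy
  obtain ⟨a, ha, c, hc, rfl⟩ := mem_sup.mp hy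
  rw [map_add, LinearMap.add_apply, hA a ha, hC c hc, add_zero]

theorem le_orthogonal_comm (hB : B.IsRefl) {A C : Submodule K V} :
    A ≤ B.orthogonal C ↔ C ≤ B.orthogonal A :=
  ⟨fun h _ hc _ ha => hB _ _ (h ha _ hc), fun h _ ha _ hc => hB _ _ (h hc _ ha)⟩

theorem sup_le_orthogonal_sup (hB : B.IsRefl) {A C : Submodule K V} (hA : A ≤ B.orthogonal A)
    (hC : C ≤ B.orthogonal C) (hAC : A ≤ B.orthogonal C) : A ⊔ C ≤ B.orthogonal (A ⊔ C) := by
  rw [orthogonal_sup]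
  exact le_inf (sup_le hA ((le_orthogonal_comm hB).mp hAC)) (sup_le hAC hC)

theorem span_singleton_le_orthogonal (hB : B.IsAlt) (v : V) :
    K ∙ v ≤ B.orthogonal (K ∙ v) := by
  rw [span_singleton_le_iff_mem, mem_orthogonal_iff]
  intro w hw
  obtain ⟨c, rfl⟩ := mem_span_singleton.mp hw
  rw [smul_left, hB.self_eq_zero, mul_zero]

theorem le_orthogonal_of_le {S L : Submodule K V} (hL : L ≤ B.orthogonal L) (hS : S ≤ L) :
    S ≤ B.orthogonal S :=
  hS.trans (hL.trans (orthogonal_le hS))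

def IsLagrangianSymmetry (B : LinearMap.BilinForm K V) (W : Submodule K V) (g : V ≃ₗ[K] V) :
    Prop :=
  ∃ c : K, c ≠ 0 ∧ (∀ w ∈ W, g w = c • w) ∧ ∀ x y, B (g x) (g y) = -c ^ 2 * B x y

theorem isLagrangianSymmetry_reflectionOfIsCompl {W W' : Submodule K V} (h : IsCompl W W')
    (hW : W ≤ B.orthogonal W) (hW' : W' ≤ B.orthogonal W') :
    B.IsLagrangianSymmetry W (reflectionOfIsCompl h) := by
  refine ⟨1, one_ne_zero, fun w hw => by rw [one_smul, reflectionOfIsCompl_apply_of_mem_left h hw],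
    fun x y => ?_⟩
  obtain ⟨p, hp, q, hq, rfl⟩ := mem_sup.mp (h.sup_eq_top ▸ mem_top : x ∈ W ⊔ W')
  obtain ⟨p', hp', q', hq', rfl⟩ := mem_sup.mp (h.sup_eq_top ▸ mem_top : y ∈ W ⊔ W')
  simp only [map_add, reflectionOfIsCompl_apply_of_mem_left h, hp, hp', map_neg,
    reflectionOfIsCompl_apply_of_mem_right h, hq, hq', LinearMap.add_apply, LinearMap.neg_apply,
    hW hp' p hp, hW' hq' q hq]
  ring

section Symmetry

variable {W : Submodule K V} {g : V ≃ₗ[K] V} {c : K}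

theorem apply_apply_eq_sq_smul (hW : B.orthogonal W = W) (hc : c ≠ 0)
    (hgW : ∀ w ∈ W, g w = c • w) (hgB : ∀ x y, B (g x) (g y) = -c ^ 2 * B x y) (x : V) :
    g (g x) = c ^ 2 • x := by
  have hmem : g x + c • x ∈ W := by
    rw [← hW]
    intro w hw
    have h := hgB w x
    rw [hgW w hw, smul_left] at h
    rw [map_add, map_smul, smul_eq_mul]
    exact mul_left_cancel₀ hc (by linear_combination h)
  have h := hgW _ hmem
  rw [map_add, map_smul, smul_add, smul_smul] at h
  rw [sq]
  exact add_right_cancel (h.trans (add_comm _ _))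

theorem eigenspace_le_orthogonal [NeZero (2 : K)] (hc : c ≠ 0)
    (hgB : ∀ x y, B (g x) (g y) = -c ^ 2 * B x y) {ε : K} (hε : ε ^ 2 = c ^ 2) :
    eigenspace (g : Module.End K V) ε ≤ B.orthogonal (eigenspace (g : Module.End K V) ε) := by
  intro x hx y hy
  have hx' : g x = ε • x := mem_eigenspace_iff.mp hx
  have hy' : g y = ε • y := mem_eigenspace_iff.mp hy
  have h := hgB y x
  rw [hx', hy', smul_left, smul_right] at h
  have h2 : (2 * c ^ 2) * B y x = 0 := by linear_combination h - B y x * hε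
  exact (mul_eq_zero.mp h2).resolve_left (mul_ne_zero two_ne_zero (pow_ne_zero 2 hc))

theorem le_inf_sup_inf_of_forall_mem [NeZero (2 : K)] (hW : B.orthogonal W = W) (hc : c ≠ 0)
    (hgW : ∀ w ∈ W, g w = c • w) (hgB : ∀ x y, B (g x) (g y) = -c ^ 2 * B x y)
    {W₁ W₂ : Submodule K V} (h₂ : B.orthogonal W₂ = W₂) (hg₁ : ∀ x ∈ W₁, g x ∈ W₁)
    (hg₂ : ∀ x ∈ W₂, g x ∈ W₂) (hW₂ : Disjoint W W₂) : W₁ ≤ W₁ ⊓ W ⊔ W₁ ⊓ W₂ := by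
  set f : Module.End K V := g.toLinearMap
  have hf : ∀ x, f (f x) = c ^ 2 • x := apply_apply_eq_sq_smul hW hc hgW hgB
  have hplus : eigenspace f c ≤ W :=
    calc eigenspace f c ≤ B.orthogonal (eigenspace f c) := eigenspace_le_orthogonal hc hgB rfl
      _ ≤ B.orthogonal W := orthogonal_le fun w hw => mem_eigenspace_iff.mpr (hgW w hw)
      _ = W := hW
  have hW₂le : W₂ ≤ eigenspace f (-c) := by
    have := le_inf_eigenspace_sup_inf_eigenspace hc hf hg₂
    rwa [(hW₂.symm.mono_right hplus).eq_bot, bot_sup_eq, le_inf_iff, and_iff_right le_rfl] at this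
  have hminus : eigenspace f (-c) ≤ W₂ :=
    calc eigenspace f (-c) ≤ B.orthogonal (eigenspace f (-c)) :=
          eigenspace_le_orthogonal hc hgB (neg_sq c)
      _ ≤ B.orthogonal W₂ := orthogonal_le hW₂le
      _ = W₂ := h₂
  exact (le_inf_eigenspace_sup_inf_eigenspace hc hf hg₁).trans
    (sup_le_sup (inf_le_inf_left _ hplus) (inf_le_inf_left _ hminus))

end Symmetry

variable [FiniteDimensional K V]

theorem orthogonal_eq_self_of_le (hB : B.Nondegenerate) {S : Submodule K V}
    (hS : S ≤ B.orthogonal S) (h : finrank K V ≤ 2 * finrank K S) : B.orthogonal S = S :=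
  (eq_of_le_of_finrank_le hS (by rw [finrank_orthogonal hB]; omega)).symm

theorem orthogonal_eq_self_iff (hB : B.Nondegenerate) {S : Submodule K V} :
    B.orthogonal S = S ↔ S ≤ B.orthogonal S ∧ 2 * finrank K S = finrank K V := by
  refine ⟨fun h => ⟨h.ge, ?_⟩, fun h => orthogonal_eq_self_of_le hB h.1 h.2.ge⟩
  have := finrank_orthogonal hB S
  rw [h] at this
  have := S.finrank_le
  omega

theorem finrank_eq_of_orthogonal_eq_self (hB : B.Nondegenerate) {W₁ W₂ : Submodule K V}
    (h₁ : B.orthogonal W₁ = W₁) (h₂ : B.orthogonal W₂ = W₂) : finrank K W₁ = finrank K W₂ := by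
  have := ((orthogonal_eq_self_iff hB).mp h₁).2
  have := ((orthogonal_eq_self_iff hB).mp h₂).2
  omega

theorem isCompl_of_disjoint (hB : B.Nondegenerate) {L L' : Submodule K V}
    (hL : B.orthogonal L = L) (hL' : B.orthogonal L' = L') (h : Disjoint L L') : IsCompl L L' := by
  refine (isCompl_iff_disjoint L L' ?_).mpr h
  have := ((orthogonal_eq_self_iff hB).mp hL).2
  have := finrank_eq_of_orthogonal_eq_self hB hL hL'
  omega

theorem le_sup_of_inf_le (hB : B.Nondegenerate) (hR : B.IsRefl) {W W₁ W₂ : Submodule K V}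
    (hW : B.orthogonal W = W) (h₁ : B.orthogonal W₁ = W₁) (h₂ : B.orthogonal W₂ = W₂)
    (h : W ⊓ W₂ ≤ W₁) : W₁ ≤ W ⊔ W₂ := by
  have := orthogonal_le (B := B) h
  rwa [h₁, ← hW, ← h₂, ← orthogonal_sup, orthogonal_orthogonal hB hR] at this

theorem orthogonal_eq_self_of_orthogonal_le_sup (hB : B.Nondegenerate) (hR : B.IsRefl)
    {T L : Submodule K V} (hT : T ≤ B.orthogonal T) (hL : B.orthogonal L = L)
    (hTL : Disjoint T L) (h : B.orthogonal T ≤ T ⊔ L) : B.orthogonal T = T := by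
  have hle : B.orthogonal T ⊓ L ≤ T := by
    have := orthogonal_le (B := B) h
    rwa [orthogonal_sup, orthogonal_orthogonal hB hR, hL] at this
  have hdisj : Disjoint (B.orthogonal T) L :=
    disjoint_iff_inf_le.mpr ((le_inf hle inf_le_right).trans hTL.le_bot)
  have := finrank_add_finrank_le_of_disjoint hdisj
  rw [finrank_orthogonal hB] at this
  have := ((orthogonal_eq_self_iff hB).mp hL).2
  exact orthogonal_eq_self_of_le hB hT (by omega)

theorem exists_orthogonal_eq_self_le_disjoint (hB : B.Nondegenerate) (hA : B.IsAlt)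
    {T L₁ L₂ : Submodule K V} (hT : T ≤ B.orthogonal T) (h₁ : B.orthogonal L₁ = L₁)
    (h₂ : B.orthogonal L₂ = L₂) (hT₁ : Disjoint T L₁) (hT₂ : Disjoint T L₂) :
    ∃ W, B.orthogonal W = W ∧ T ≤ W ∧ Disjoint W L₁ ∧ Disjoint W L₂ := by
  induction T using WellFoundedGT.induction with
  | _ T ih =>
  by_cases hTT : B.orthogonal T = T
  · exact ⟨T, hTT, le_rfl, hT₁, hT₂⟩
  obtain ⟨v, hv, hv₁, hv₂⟩ := exists_mem_notMem_notMem
    (fun h => hTT (orthogonal_eq_self_of_orthogonal_le_sup hB hA.isRefl hT h₁ hT₁ h))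
    (fun h => hTT (orthogonal_eq_self_of_orthogonal_le_sup hB hA.isRefl hT h₂ hT₂ h))
  have hvT : ¬K ∙ v ≤ T := fun h => hv₁ (mem_sup_left (h (mem_span_singleton_self v)))
  obtain ⟨W, hW, hTW, hW₁, hW₂⟩ := ih (T ⊔ K ∙ v) (left_lt_sup.mpr hvT)
    (sup_le_orthogonal_sup hA.isRefl hT (span_singleton_le_orthogonal hA v)
      ((le_orthogonal_comm hA.isRefl).mpr ((span_singleton_le_iff_mem _ _).mpr hv)))
    (disjoint_sup_span_singleton hT₁ hv₁) (disjoint_sup_span_singleton hT₂ hv₂)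
  exact ⟨W, hW, le_sup_left.trans hTW, hW₁, hW₂⟩

theorem orthogonal_eq_self_span_singleton_sup (hB : B.Nondegenerate) (hA : B.IsAlt)
    {L : Submodule K V} {a : V} (hL : B.orthogonal L = L) (ha : a ∉ L) :
    B.orthogonal (K ∙ a ⊔ L ⊓ B.orthogonal (K ∙ a)) = K ∙ a ⊔ L ⊓ B.orthogonal (K ∙ a) := by
  have ha₀ : a ≠ 0 := fun h => ha (h ▸ L.zero_mem)
  have hiso : L ⊓ B.orthogonal (K ∙ a) ≤ B.orthogonal (L ⊓ B.orthogonal (K ∙ a)) :=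
    le_orthogonal_of_le hL.ge inf_le_left
  refine orthogonal_eq_self_of_le hB (sup_le_orthogonal_sup hA.isRefl
    (span_singleton_le_orthogonal hA a) hiso ((le_orthogonal_comm hA.isRefl).mp inf_le_right)) ?_
  have hlt : finrank K ↥(L ⊓ B.orthogonal (K ∙ a)) <
      finrank K ↥(K ∙ a ⊔ L ⊓ B.orthogonal (K ∙ a)) :=
    finrank_lt_finrank_of_lt (right_lt_sup.mpr fun h => ha (h (mem_span_singleton_self a)).1)
  have hsum := finrank_sup_add_finrank_inf_eq L (B.orthogonal (K ∙ a))
  rw [finrank_orthogonal hB, finrank_span_singleton ha₀] at hsum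
  have := (L ⊔ B.orthogonal (K ∙ a)).finrank_le
  have := ((orthogonal_eq_self_iff hB).mp hL).2
  have : 0 < finrank K V := finrank_pos_iff_exists_ne_zero.mpr ⟨a, ha₀⟩
  omega

theorem exists_orthogonal_eq_self_inf_eq_span_singleton (hB : B.Nondegenerate) (hA : B.IsAlt)
    {L₁ L₂ : Submodule K V} (h₁ : B.orthogonal L₁ = L₁) (h₂ : B.orthogonal L₂ = L₂) {a : V}
    (ha₁ : a ∈ L₁) (ha₂ : a ∉ L₂) :
    ∃ W, B.orthogonal W = W ∧ W ⊓ L₁ = K ∙ a ∧ Disjoint W L₂ := by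
  set M := K ∙ a ⊔ L₂ ⊓ B.orthogonal (K ∙ a)
  have haL₁ : K ∙ a ≤ L₁ := (span_singleton_le_iff_mem a L₁).mpr ha₁
  obtain ⟨L, hL, -, hL₁, hLM⟩ := exists_orthogonal_eq_self_le_disjoint hB hA bot_le h₁
    (orthogonal_eq_self_span_singleton_sup hB hA h₂ ha₂) disjoint_bot_left disjoint_bot_left
  have haL : a ∉ L := fun h => ha₂ (disjoint_def.mp hL₁ a h ha₁ ▸ L₂.zero_mem)
  set W := K ∙ a ⊔ L ⊓ B.orthogonal (K ∙ a)
  have hWa : W ≤ B.orthogonal (K ∙ a) := sup_le (span_singleton_le_orthogonal hA a) inf_le_right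
  have hWM : W ⊓ M = K ∙ a := by
    rw [sup_inf_assoc_of_le _ le_sup_left, (hLM.mono_left inf_le_left).eq_bot, sup_bot_eq]
  refine ⟨W, orthogonal_eq_self_span_singleton_sup hB hA hL haL, ?_, ?_⟩
  · rw [sup_inf_assoc_of_le _ haL₁, (hL₁.mono_left inf_le_left).eq_bot, sup_bot_eq]
  · have hWL₂ : W ⊓ L₂ ≤ K ∙ a ⊓ L₂ :=
      le_inf (hWM ▸ le_inf inf_le_left (le_sup_of_le_right (le_inf inf_le_right
        (inf_le_left.trans hWa)))) inf_le_right
    exact disjoint_iff_inf_le.mpr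
      (hWL₂.trans (disjoint_span_singleton_of_notMem ha₂).symm.le_bot)

theorem exists_orthogonal_eq_self_le_inf_sup_inf (hB : B.Nondegenerate) (hA : B.IsAlt)
    {W W₁ W₂ : Submodule K V} (hW : B.orthogonal W = W) (h₂ : B.orthogonal W₂ = W₂)
    (hcov : finrank K W₁ ≤ finrank K ↥(W₁ ⊓ W₂) + 1) (hW₁ : ¬W ⊓ W₁ ≤ W₁ ⊓ W₂) :
    ∃ W', B.orthogonal W' = W' ∧ Disjoint W W' ∧
      W₁ ≤ W₁ ⊓ W ⊔ W₁ ⊓ W' ∧ W₂ ≤ W₂ ⊓ W ⊔ W₂ ⊓ W' := by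
  obtain ⟨C, -, hCU, hPC, hPCU⟩ :=
    exists_le_le_disjoint_sup_eq (inf_le_right : W ⊓ (W₁ ⊓ W₂) ≤ _) bot_le disjoint_bot_right
  have hA₂C : Disjoint (W ⊓ W₂) C :=
    disjoint_def.mpr fun x hx hxC => disjoint_def.mp hPC x ⟨hx.1, hCU hxC⟩ hxC
  obtain ⟨T, hCT, hTW₂, hA₂T, hA₂TW₂⟩ :=
    exists_le_le_disjoint_sup_eq inf_le_right (hCU.trans inf_le_right) hA₂C
  have hTW : Disjoint T W :=
    disjoint_def.mpr fun x hxT hxW => disjoint_def.mp hA₂T x ⟨hxW, hTW₂ hxT⟩ hxT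
  obtain ⟨W', hW', hTW', hW'W, -⟩ :=
    exists_orthogonal_eq_self_le_disjoint hB hA (le_orthogonal_of_le h₂.ge hTW₂) hW hW hTW hTW
  have hW₁eq : W ⊓ W₁ ⊔ C = W₁ := by
    refine le_antisymm (sup_le inf_le_right (hCU.trans inf_le_left)) ?_
    calc W₁ = W₁ ⊓ W₂ ⊔ W ⊓ W₁ :=
          (sup_eq_of_finrank_le_succ inf_le_left inf_le_right hW₁ hcov).symm
      _ = W ⊓ (W₁ ⊓ W₂) ⊔ C ⊔ W ⊓ W₁ := by rw [hPCU]
      _ ≤ W ⊓ W₁ ⊔ C := sup_le (sup_le (le_sup_of_le_left (inf_le_inf_left _ inf_le_left))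
          le_sup_right) le_sup_left
  refine ⟨W', hW', hW'W.symm, ?_, ?_⟩
  · calc W₁ = W ⊓ W₁ ⊔ C := hW₁eq.symm
      _ ≤ W₁ ⊓ W ⊔ W₁ ⊓ W' := sup_le_sup (inf_comm W W₁).le
          (le_inf (hCU.trans inf_le_left) (hCT.trans hTW'))
  · calc W₂ = W ⊓ W₂ ⊔ T := hA₂TW₂.symm
      _ ≤ W₂ ⊓ W ⊔ W₂ ⊓ W' := sup_le_sup (inf_comm W W₂).le (le_inf hTW₂ hTW')

theorem exists_isLagrangianSymmetry_map_eq_map_eq (hB : B.Nondegenerate) (hA : B.IsAlt)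
    {W W₁ W₂ : Submodule K V} (hW : B.orthogonal W = W) (h₂ : B.orthogonal W₂ = W₂)
    (hcov : finrank K W₁ ≤ finrank K ↥(W₁ ⊓ W₂) + 1) (hW₁ : ¬W ⊓ W₁ ≤ W₁ ⊓ W₂) :
    ∃ g, B.IsLagrangianSymmetry W g ∧
      W₁.map g.toLinearMap = W₁ ∧ W₂.map g.toLinearMap = W₂ := by
  obtain ⟨W', hW', hWW', hsplit₁, hsplit₂⟩ :=
    exists_orthogonal_eq_self_le_inf_sup_inf hB hA hW h₂ hcov hW₁
  have hc := isCompl_of_disjoint hB hW hW' hWW'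
  exact ⟨_, isLagrangianSymmetry_reflectionOfIsCompl hc hW.ge hW'.ge,
    map_reflectionOfIsCompl_eq hc hsplit₁, map_reflectionOfIsCompl_eq hc hsplit₂⟩

theorem exists_orthogonal_eq_self_add_mem [NeZero (2 : K)] (hB : B.Nondegenerate)
    (hA : B.IsAlt) {W W₁ W₂ : Submodule K V} (hW : B.orthogonal W = W)
    (h₁ : B.orthogonal W₁ = W₁) (h₂ : B.orthogonal W₂ = W₂) (hW₁ : W ⊓ W₁ ≤ W₁ ⊓ W₂)
    {v₁ v₂ : V} (hv₁ : v₁ ∈ W₁) (hv₁U : v₁ ∉ W₁ ⊓ W₂) (hv₂ : v₂ ∈ W₂) (hwv : v₁ - v₂ ∈ W) :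
    ∃ W', B.orthogonal W' = W' ∧ Disjoint W W' ∧
      W₁ ⊓ W₂ ≤ W₁ ⊓ W₂ ⊓ W ⊔ W₁ ⊓ W₂ ⊓ W' ∧ v₁ + v₂ ∈ W' := by
  set U := W₁ ⊓ W₂
  obtain ⟨C, -, hCU, hPC, hPCU⟩ :=
    exists_le_le_disjoint_sup_eq (inf_le_right : W ⊓ U ≤ _) bot_le disjoint_bot_right
  have hzC : C ≤ B.orthogonal (K ∙ (v₁ + v₂)) := by
    refine (le_orthogonal_comm hA.isRefl).mpr ((span_singleton_le_iff_mem _ _).mpr ?_)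
    intro c hc
    rw [map_add, (h₁.symm ▸ hv₁ : v₁ ∈ B.orthogonal W₁) c (hCU hc).1,
      (h₂.symm ▸ hv₂ : v₂ ∈ B.orthogonal W₂) c (hCU hc).2, add_zero]
  have hzCW : v₁ + v₂ ∉ C ⊔ W := by
    intro h
    obtain ⟨c, hc, w, hw, hcw⟩ := mem_sup.mp h
    have e : (2 : K) • v₁ - c = w + (v₁ - v₂) := by
      rw [two_smul, ← sub_eq_iff_eq_add.mpr hcw.symm]
      abel
    have h2 : (2 : K) • v₁ - c ∈ U :=
      hW₁ ⟨e ▸ W.add_mem hw hwv, W₁.sub_mem (W₁.smul_mem _ hv₁) (hCU hc).1⟩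
    exact hv₁U ((U.smul_mem_iff (two_ne_zero : (2 : K) ≠ 0)).mp
      (sub_add_cancel ((2 : K) • v₁) c ▸ U.add_mem h2 (hCU hc)))
  have hCW : Disjoint C W :=
    disjoint_def.mpr fun x hxC hxW => disjoint_def.mp hPC x ⟨hxW, hCU hxC⟩ hxC
  obtain ⟨W', hW', hTW', hW'W, -⟩ := exists_orthogonal_eq_self_le_disjoint hB hA
    (sup_le_orthogonal_sup hA.isRefl (le_orthogonal_of_le h₁.ge (hCU.trans inf_le_left))
      (span_singleton_le_orthogonal hA _) hzC) hW hW
    (disjoint_sup_span_singleton hCW hzCW) (disjoint_sup_span_singleton hCW hzCW)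
  exact ⟨W', hW', hW'W.symm, hPCU.ge.trans
    (sup_le_sup (inf_comm W U).le (le_inf hCU (le_sup_left.trans hTW'))),
    hTW' (mem_sup_right (mem_span_singleton_self _))⟩

theorem exists_isLagrangianSymmetry_map_eq_swap [NeZero (2 : K)] (hB : B.Nondegenerate)
    (hA : B.IsAlt) {W W₁ W₂ : Submodule K V} (hW : B.orthogonal W = W)
    (h₁ : B.orthogonal W₁ = W₁) (h₂ : B.orthogonal W₂ = W₂)
    (hcov : finrank K W₁ ≤ finrank K ↥(W₁ ⊓ W₂) + 1) (h₁₂ : ¬W₁ ≤ W₂)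
    (hW₁ : W ⊓ W₁ ≤ W₁ ⊓ W₂) (hW₂ : W ⊓ W₂ ≤ W₁ ⊓ W₂) :
    ∃ g, B.IsLagrangianSymmetry W g ∧
      W₁.map g.toLinearMap = W₂ ∧ W₂.map g.toLinearMap = W₁ := by
  set U := W₁ ⊓ W₂
  obtain ⟨v₁, hv₁, hv₁U⟩ := SetLike.not_le_iff_exists.mp fun h => h₁₂ (h.trans inf_le_right)
  obtain ⟨w, hw, v₂, hv₂, hsum⟩ :=
    mem_sup.mp (le_sup_of_inf_le hB hA.isRefl hW h₁ h₂ (hW₂.trans inf_le_left) hv₁)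
  have hwv : v₁ - v₂ ∈ W := by rwa [← hsum, add_sub_cancel_right]
  have hv₂U : v₂ ∉ U := fun h =>
    hv₁U (sub_add_cancel v₁ v₂ ▸ U.add_mem (hW₁ ⟨hwv, W₁.sub_mem hv₁ h.1⟩) h)
  obtain ⟨W', hW', hWW', hU, hz⟩ :=
    exists_orthogonal_eq_self_add_mem hB hA hW h₁ h₂ hW₁ hv₁ hv₁U hv₂ hwv
  have hc := isCompl_of_disjoint hB hW hW' hWW'
  have hW₁eq : U ⊔ K ∙ v₁ = W₁ := sup_eq_of_finrank_le_succ inf_le_left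
    ((span_singleton_le_iff_mem _ _).mpr hv₁) (fun h => hv₁U (h (mem_span_singleton_self _))) hcov
  have hW₂eq : U ⊔ K ∙ v₂ = W₂ := sup_eq_of_finrank_le_succ inf_le_right
    ((span_singleton_le_iff_mem _ _).mpr hv₂) (fun h => hv₂U (h (mem_span_singleton_self _)))
    (finrank_eq_of_orthogonal_eq_self hB h₂ h₁ ▸ hcov)
  refine ⟨reflectionOfIsCompl hc,
    isLagrangianSymmetry_reflectionOfIsCompl hc hW.ge hW'.ge, ?_, ?_⟩
  · rw [← hW₁eq, ← hW₂eq, map_reflectionOfIsCompl_sup_span_singleton hc hU hwv hz]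
  · rw [← hW₁eq, ← hW₂eq, map_reflectionOfIsCompl_sup_span_singleton hc hU
      (by rwa [← neg_sub, neg_mem_iff]) (by rwa [add_comm])]

theorem exists_isLagrangianSymmetry_of_finrank_inf_add_one [NeZero (2 : K)] (hB : B.Nondegenerate)
    (hA : B.IsAlt) {W W₁ W₂ : Submodule K V} (hW : B.orthogonal W = W)
    (h₁ : B.orthogonal W₁ = W₁) (h₂ : B.orthogonal W₂ = W₂)
    (hk : finrank K ↥(W₁ ⊓ W₂) + 1 = finrank K W₁) :
    ∃ g, B.IsLagrangianSymmetry W g ∧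
      (W₁.map g.toLinearMap = W₁ ∧ W₂.map g.toLinearMap = W₂ ∨
        W₁.map g.toLinearMap = W₂ ∧ W₂.map g.toLinearMap = W₁) := by
  have h₁₂ : ¬W₁ ≤ W₂ := fun h => by rw [inf_eq_left.mpr h] at hk; omega
  by_cases hW₁ : W ⊓ W₁ ≤ W₁ ⊓ W₂
  · by_cases hW₂ : W ⊓ W₂ ≤ W₁ ⊓ W₂
    · obtain ⟨g, hg, hswap⟩ :=
        exists_isLagrangianSymmetry_map_eq_swap hB hA hW h₁ h₂ hk.ge h₁₂ hW₁ hW₂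
      exact ⟨g, hg, Or.inr hswap⟩
    · obtain ⟨g, hg, hfix₂, hfix₁⟩ := exists_isLagrangianSymmetry_map_eq_map_eq hB hA hW h₁
        (by rw [inf_comm, ← finrank_eq_of_orthogonal_eq_self hB h₁ h₂]; omega)
        (by rwa [inf_comm W₂])
      exact ⟨g, hg, Or.inl ⟨hfix₁, hfix₂⟩⟩
  · obtain ⟨g, hg, hfix⟩ := exists_isLagrangianSymmetry_map_eq_map_eq hB hA hW h₂ hk.ge hW₁
    exact ⟨g, hg, Or.inl hfix⟩

theorem finrank_inf_add_one_of_forall_exists_isLagrangianSymmetry [NeZero (2 : K)]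
    (hB : B.Nondegenerate)
    (hA : B.IsAlt) {W₁ W₂ : Submodule K V} (h₁ : B.orthogonal W₁ = W₁)
    (h₂ : B.orthogonal W₂ = W₂) (hne : W₁ ≠ W₂)
    (H : ∀ W, B.orthogonal W = W → W ≠ W₁ → W ≠ W₂ → ∃ g, B.IsLagrangianSymmetry W g ∧
      (W₁.map g.toLinearMap = W₁ ∧ W₂.map g.toLinearMap = W₂ ∨
        W₁.map g.toLinearMap = W₂ ∧ W₂.map g.toLinearMap = W₁)) :
    finrank K ↥(W₁ ⊓ W₂) + 1 = finrank K W₁ := by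
  have hfin := finrank_eq_of_orthogonal_eq_self hB h₁ h₂
  have h₁₂ : ¬W₁ ≤ W₂ := fun h => hne (eq_of_le_of_finrank_eq h hfin)
  have hlt := finrank_lt_finrank_of_lt (inf_lt_left.mpr h₁₂)
  obtain ⟨a, ha₁, ha₂⟩ := SetLike.not_le_iff_exists.mp h₁₂
  have ha₀ : a ≠ 0 := fun h => ha₂ (h ▸ W₂.zero_mem)
  by_contra hk
  obtain ⟨W, hW, hWW₁, hWW₂⟩ := exists_orthogonal_eq_self_inf_eq_span_singleton hB hA h₁ h₂ ha₁ ha₂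
  have hne₁ : W ≠ W₁ := by
    rintro rfl
    rw [inf_idem] at hWW₁
    rw [hWW₁, finrank_span_singleton ha₀] at hk hlt
    omega
  have hne₂ : W ≠ W₂ := by
    rintro rfl
    rw [disjoint_self.mp hWW₂, finrank_bot] at hfin
    omega
  have haW : a ∈ W := (hWW₁.ge (mem_span_singleton_self a)).1
  obtain ⟨g, ⟨c, hc, hgW, hgB⟩, hfix | hswap⟩ := H W hW hne₁ hne₂
  · have hle := le_inf_sup_inf_of_forall_mem hW hc hgW hgB h₂
      (fun x hx => hfix.1 ▸ mem_map_of_mem hx) (fun x hx => hfix.2 ▸ mem_map_of_mem hx) hWW₂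
    rw [inf_comm, hWW₁] at hle
    have := (finrank_mono hle).trans (finrank_add_le_finrank_add_finrank _ _)
    rw [finrank_span_singleton ha₀] at this
    omega
  · have hga : g a ∈ W₂ := hswap.1 ▸ mem_map_of_mem ha₁
    rw [hgW a haW] at hga
    exact ha₂ ((W₂.smul_mem_iff hc).mp hga)

end LinearMap.BilinForm

section StandardSymplecticForm

open LinearMap.BilinForm

variable {m : ℕ}

def omegaForm (m : ℕ) : LinearMap.BilinForm ℝ (Fin (2 * m) → ℝ) :=
  LinearMap.mk₂ ℝ (Omega m)
    (fun _ _ _ => by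
      simp only [Omega, Pi.add_apply, ← Finset.sum_add_distrib]
      exact Finset.sum_congr rfl fun _ _ => by ring)
    (fun _ _ _ => by
      simp only [Omega, Pi.smul_apply, smul_eq_mul, Finset.mul_sum]
      exact Finset.sum_congr rfl fun _ _ => by ring)
    (fun _ _ _ => by
      simp only [Omega, Pi.add_apply, ← Finset.sum_add_distrib]
      exact Finset.sum_congr rfl fun _ _ => by ring)
    (fun _ _ _ => by
      simp only [Omega, Pi.smul_apply, smul_eq_mul, Finset.mul_sum]
      exact Finset.sum_congr rfl fun _ _ => by ring)

theorem omegaForm_apply (x y : Fin (2 * m) → ℝ) : omegaForm m x y = Omega m x y := rfl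

theorem omegaForm_isAlt : (omegaForm m).IsAlt := fun x => by
  simp [omegaForm_apply, Omega, mul_comm]

theorem omega_single_add (x : Fin (2 * m) → ℝ) (i : Fin m) :
    Omega m x (Pi.single ⟨m + i.1, by omega⟩ 1) = x ⟨i.1, by omega⟩ := by
  have hi := i.2
  rw [Omega, Finset.sum_eq_single i (fun j _ hj => ?_) (by simp)] <;>
    simp only [Pi.single_apply, Fin.ext_iff] at * <;>
    split_ifs <;> first | (exfalso; omega) | ring

theorem omega_single (x : Fin (2 * m) → ℝ) (i : Fin m) :
    Omega m x (Pi.single ⟨i.1, by omega⟩ 1) = -x ⟨m + i.1, by omega⟩ := by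
  have hi := i.2
  rw [Omega, Finset.sum_eq_single i (fun j _ hj => ?_) (by simp)] <;>
    simp only [Pi.single_apply, Fin.ext_iff] at * <;>
    split_ifs <;> first | (exfalso; omega) | ring

theorem omegaForm_nondegenerate : (omegaForm m).Nondegenerate := by
  refine (LinearMap.IsRefl.nondegenerate_iff_separatingLeft omegaForm_isAlt.isRefl).mpr
    fun x hx => funext fun j => ?_
  rw [Pi.zero_apply]
  rcases lt_or_ge j.1 m with hj | hj
  · exact (omega_single_add x ⟨j.1, hj⟩).symm.trans (hx _)
  · have := (omega_single x ⟨j.1 - m, by omega⟩).symm.trans (hx _)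
    rw [neg_eq_zero] at this
    convert this using 2
    ext
    simp only
    omega

theorem isLagrangian_iff {W : Submodule ℝ (Fin (2 * m) → ℝ)} :
    IsLagrangian m W ↔ (omegaForm m).orthogonal W = W := by
  rw [IsLagrangian, orthogonal_eq_self_iff omegaForm_nondegenerate, finrank_fin_fun]
  exact ⟨fun ⟨hr, hiso⟩ => ⟨fun y hy x hx => hiso x hx y hy, by omega⟩,
    fun ⟨hiso, hr⟩ => ⟨by omega, fun x hx y hy => hiso hy x hx⟩⟩

theorem lagSym_iff {W : Submodule ℝ (Fin (2 * m) → ℝ)}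
    {g : (Fin (2 * m) → ℝ) ≃ₗ[ℝ] (Fin (2 * m) → ℝ)} :
    LagSym m W g ↔ (omegaForm m).IsLagrangianSymmetry W g :=
  Iff.rfl

end StandardSymplecticForm

open LinearMap.BilinForm in
theorem stmt1 (m : ℕ) (hm : 2 ≤ m)
    (W1 W2 : Submodule ℝ (Fin (2 * m) → ℝ))
    (h1 : IsLagrangian m W1) (h2 : IsLagrangian m W2) (hne : W1 ≠ W2) :
    (∀ W : Submodule ℝ (Fin (2 * m) → ℝ), IsLagrangian m W → W ≠ W1 → W ≠ W2 →
        ∃ g : (Fin (2 * m) → ℝ) ≃ₗ[ℝ] (Fin (2 * m) → ℝ), LagSym m W g ∧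
          ((W1.map g.toLinearMap = W1 ∧ W2.map g.toLinearMap = W2) ∨ (W1.map g.toLinearMap = W2 ∧ W2.map g.toLinearMap = W1)))
      ↔ Module.finrank ℝ ↥(W1 ⊓ W2) = m - 1 := by
  have hW1 : finrank ℝ W1 = m := h1.1
  rw [isLagrangian_iff] at h1 h2
  simp only [isLagrangian_iff, lagSym_iff]
  rw [show finrank ℝ ↥(W1 ⊓ W2) = m - 1 ↔ finrank ℝ ↥(W1 ⊓ W2) + 1 = finrank ℝ W1 by omega]
  exact ⟨finrank_inf_add_one_of_forall_exists_isLagrangianSymmetry omegaForm_nondegenerate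
      omegaForm_isAlt h1 h2 hne,
    fun hk _ hW _ _ => exists_isLagrangianSymmetry_of_finrank_inf_add_one omegaForm_nondegenerate
      omegaForm_isAlt hW h1 h2 hk⟩
end

section
/- Let W1, W2 be k-dimensional subspaces of ℝ^m with dim(W1 ∩ W2) = k − 1, and let W3, W4 be k-dimensional subspaces with W3, W4 ∉ {W1, W2}. Then there exists g ∈ GL(m,ℝ) with {g(W1), g(W2)} = {W1, W2} and g(W3) = W4 if and only if the following three conditions hold: dim(W3 ∩ W1 ∩ W2) = dim(W4 ∩ W1 ∩ W2), dim(W3 ∩ (W1 + W2)) = dim(W4 ∩ (W1 + W2)), and max(dim(W3 ∩ W1), dim(W3 ∩ W2)) = max(dim(W4 ∩ W1), dim(W4 ∩ W2)). -/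
/-!
Put `U = W₁ ⊓ W₂`, a hyperplane in both `W₁` and `W₂`, and `S = W₁ ⊔ W₂`. A subspace `W` has the
invariants `a = dim (W ⊓ U)`, `dᵢ = dim (W ⊓ Wᵢ)` and `b = dim (W ⊓ S)`, and these satisfy
`dᵢ ∈ {a, a + 1}`, `b ≤ dᵢ + 1` and `d₁ + d₂ ≤ a + b`. Take a basis of `W ⊓ U`, complete it to
`U`, add `x₁ ∈ W₁ \ U` and `x₂ ∈ W₂ \ U`, chosen in `W` when possible and with `x₁ + x₂ ∈ W` when
`W ⊓ S` is not spanned by `W ⊓ W₁` and `W ⊓ W₂`, and complete `W ⊓ S` to `W`. The result is a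
linearly independent family in which `W₁`, `W₂` and `W` are spanned by sub-families (and
`x₁ + x₂`) in a pattern that depends only on `(a, d₁, d₂, b)`. Any two linearly independent
families of the same length are related by a linear automorphism. Hence the invariants classify
`W` up to automorphisms preserving `W₁` and `W₂`. The constraints above show that `a`, `b` and
`max d₁ d₂` determine `{d₁, d₂}`, and exchanging `d₁` and `d₂` amounts to exchanging `W₁` and `W₂`.
-/

open Module Submodule Set

variable {K V : Type*} [DivisionRing K] [AddCommGroup V] [Module K V]

theorem LinearIndependent.exists_linearEquiv_apply_eq {ι : Type*} [Finite ι] {v w : ι → V}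
    (hv : LinearIndependent K v) (hw : LinearIndependent K w) :
    ∃ g : V ≃ₗ[K] V, ∀ i, g (v i) = w i := by
  have := FiniteDimensional.span_of_finite K (finite_range v)
  obtain ⟨g, hg⟩ := exists_linearEquiv_restrict_eq
    ((Basis.span hv).equiv (Basis.span hw) (Equiv.refl ι))
  refine ⟨g, fun i => ?_⟩
  have := hg (Basis.span hv i)
  rwa [Basis.equiv_apply, Basis.span_apply, Basis.span_apply, eq_comm] at this

namespace Submodule

theorem finrank_inf_eq_of_map_eq (g : V ≃ₗ[K] V) {W₁ W₂ W W₁' W₂' W' : Submodule K V}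
    (h₁ : W₁.map g.toLinearMap = W₁') (h₂ : W₂.map g.toLinearMap = W₂')
    (h : W.map g.toLinearMap = W') :
    finrank K ↥(W' ⊓ W₁' ⊓ W₂') = finrank K ↥(W ⊓ W₁ ⊓ W₂) ∧
      finrank K ↥(W' ⊓ W₁') = finrank K ↥(W ⊓ W₁) ∧
      finrank K ↥(W' ⊓ W₂') = finrank K ↥(W ⊓ W₂) ∧
      finrank K ↥(W' ⊓ (W₁' ⊔ W₂')) = finrank K ↥(W ⊓ (W₁ ⊔ W₂)) := by
  subst h₁ h₂ h
  have hinf := fun p q : Submodule K V =>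
    (Submodule.map_inf (p := p) (q := q) g.toLinearMap g.injective).symm
  refine ⟨?_, ?_, ?_, ?_⟩
  · rw [hinf, hinf, LinearEquiv.finrank_map_eq]
  · rw [hinf, LinearEquiv.finrank_map_eq]
  · rw [hinf, LinearEquiv.finrank_map_eq]
  · rw [← Submodule.map_sup, hinf, LinearEquiv.finrank_map_eq]

variable [FiniteDimensional K V]

theorem exists_sup_span_range_eq {A P : Submodule K V} (hAP : A ≤ P) {n : ℕ}
    (hn : finrank K A + n = finrank K P) : ∃ c : Fin n → V, A ⊔ span K (range c) = P := by
  obtain ⟨C, hC⟩ := A.exists_isCompl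
  have hsup : A ⊔ C ⊓ P = P := by
    rw [← sup_inf_assoc_of_le C hAP, hC.sup_eq_top, top_inf_eq]
  have hinf : A ⊓ (C ⊓ P) = ⊥ := by rw [← inf_assoc, hC.inf_eq_bot, bot_inf_eq]
  have hCP : finrank K ↥(C ⊓ P) = n := by
    have := finrank_sup_add_finrank_inf_eq A (C ⊓ P)
    rw [hsup, hinf, finrank_bot] at this
    omega
  let b := finBasisOfFinrankEq K ↥(C ⊓ P) hCP
  have hb : span K (range ((C ⊓ P).subtype ∘ b)) = C ⊓ P := by
    rw [range_comp, span_image, b.span_eq, map_top, range_subtype]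
  exact ⟨_, by rw [hb, hsup]⟩

theorem sup_span_singleton_eq_of_finrank_le {A P : Submodule K V} (hAP : A ≤ P)
    (hP : finrank K P ≤ finrank K A + 1) {x : V} (hx : x ∈ P) (hxA : x ∉ A) :
    A ⊔ span K {x} = P :=
  eq_of_le_of_finrank_le (sup_le hAP ((span_singleton_le_iff_mem x P).2 hx))
    (by rwa [finrank_sup_span_singleton hxA])

theorem finrank_add_finrank_inf_le {P M : Submodule K V} (hPM : P ≤ M) (N : Submodule K V) :
    finrank K P + finrank K ↥(M ⊓ N) ≤ finrank K ↥(P ⊓ N) + finrank K M := by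
  have h := finrank_sup_add_finrank_inf_eq P (M ⊓ N)
  rw [← inf_assoc, inf_eq_left.2 hPM] at h
  have := finrank_mono (sup_le hPM inf_le_left : P ⊔ M ⊓ N ≤ M)
  omega

theorem finrank_inf_sup_inf_add_finrank_inf (W P Q : Submodule K V) :
    finrank K ↥(W ⊓ P ⊔ W ⊓ Q) + finrank K ↥(W ⊓ P ⊓ Q) =
      finrank K ↥(W ⊓ P) + finrank K ↥(W ⊓ Q) := by
  rw [← finrank_sup_add_finrank_inf_eq (W ⊓ P) (W ⊓ Q), ← inf_inf_distrib_left, ← inf_assoc]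

theorem finrank_sup_eq_finrank_add_one {W₁ W₂ : Submodule K V}
    (h : finrank K ↥(W₁ ⊓ W₂) + 1 = finrank K W₂) :
    finrank K ↥(W₁ ⊔ W₂) = finrank K W₁ + 1 := by
  have := finrank_sup_add_finrank_inf_eq W₁ W₂
  omega

theorem finrank_inf_bounds {W₁ W₂ W : Submodule K V}
    (hU₁ : finrank K ↥(W₁ ⊓ W₂) + 1 = finrank K W₁)
    (hU₂ : finrank K ↥(W₁ ⊓ W₂) + 1 = finrank K W₂) {a d₁ d₂ b : ℕ}
    (ha : finrank K ↥(W ⊓ W₁ ⊓ W₂) = a) (hd₁ : finrank K ↥(W ⊓ W₁) = d₁)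
    (hd₂ : finrank K ↥(W ⊓ W₂) = d₂) (hb : finrank K ↥(W ⊓ (W₁ ⊔ W₂)) = b) :
    a ≤ d₁ ∧ d₁ ≤ a + 1 ∧ a ≤ d₂ ∧ d₂ ≤ a + 1 ∧ d₁ + d₂ ≤ a + b ∧
      b ≤ d₁ + 1 ∧ b ≤ d₂ + 1 := by
  subst ha hd₁ hd₂ hb
  have hS := finrank_sup_eq_finrank_add_one hU₂
  have h₁ := finrank_add_finrank_inf_le (inf_le_right : W ⊓ W₁ ≤ W₁) W₂
  have h₂ := finrank_add_finrank_inf_le (inf_le_right : W ⊓ W₂ ≤ W₂) W₁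
  rw [inf_right_comm, inf_comm W₂] at h₂
  have hS₁ := finrank_add_finrank_inf_le (inf_le_right : W ⊓ (W₁ ⊔ W₂) ≤ W₁ ⊔ W₂) W₁
  rw [inf_assoc W, inf_eq_right.2 (le_sup_left : W₁ ≤ W₁ ⊔ W₂)] at hS₁
  have hS₂ := finrank_add_finrank_inf_le (inf_le_right : W ⊓ (W₁ ⊔ W₂) ≤ W₁ ⊔ W₂) W₂
  rw [inf_assoc W, inf_eq_right.2 (le_sup_right : W₂ ≤ W₁ ⊔ W₂)] at hS₂
  have h₁₂ := finrank_inf_sup_inf_add_finrank_inf W W₁ W₂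
  have := finrank_mono (le_inf_sup : W ⊓ W₁ ⊔ W ⊓ W₂ ≤ W ⊓ (W₁ ⊔ W₂))
  have := finrank_mono (inf_le_left : W ⊓ W₁ ⊓ W₂ ≤ W ⊓ W₁)
  have := finrank_mono (inf_le_inf_right W₂ inf_le_left : W ⊓ W₁ ⊓ W₂ ≤ W ⊓ W₂)
  omega

theorem finrank_inf_eq_or_eq_swap_of_max_eq {W₁ W₂ W W' : Submodule K V}
    (hU₁ : finrank K ↥(W₁ ⊓ W₂) + 1 = finrank K W₁)
    (hU₂ : finrank K ↥(W₁ ⊓ W₂) + 1 = finrank K W₂)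
    (ha : finrank K ↥(W ⊓ W₁ ⊓ W₂) = finrank K ↥(W' ⊓ W₁ ⊓ W₂))
    (hb : finrank K ↥(W ⊓ (W₁ ⊔ W₂)) = finrank K ↥(W' ⊓ (W₁ ⊔ W₂)))
    (hd : max (finrank K ↥(W ⊓ W₁)) (finrank K ↥(W ⊓ W₂)) =
      max (finrank K ↥(W' ⊓ W₁)) (finrank K ↥(W' ⊓ W₂))) :
    finrank K ↥(W ⊓ W₁) = finrank K ↥(W' ⊓ W₁) ∧ finrank K ↥(W ⊓ W₂) = finrank K ↥(W' ⊓ W₂) ∨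
      finrank K ↥(W ⊓ W₁) = finrank K ↥(W' ⊓ W₂) ∧
        finrank K ↥(W ⊓ W₂) = finrank K ↥(W' ⊓ W₁) := by
  have := finrank_inf_bounds hU₁ hU₂ (W := W) rfl rfl rfl rfl
  have := finrank_inf_bounds hU₁ hU₂ (W := W') rfl rfl rfl rfl
  omega

theorem exists_notMem_eq_inf_sup_span_ite {P M N : Submodule K V} (hPM : P ≤ M)
    (hMN : ¬ M ≤ N) (hP : finrank K P ≤ finrank K ↥(P ⊓ N) + 1) :
    ∃ x ∈ M, x ∉ N ∧
      P = P ⊓ N ⊔ span K {if finrank K ↥(P ⊓ N) < finrank K P then x else 0} := by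
  by_cases hlt : finrank K ↥(P ⊓ N) < finrank K P
  · have hPN : ¬ P ≤ N := fun h => by rw [inf_eq_left.2 h] at hlt; exact lt_irrefl _ hlt
    obtain ⟨x, hxP, hxN⟩ := SetLike.not_le_iff_exists.1 hPN
    refine ⟨x, hPM hxP, hxN, ?_⟩
    rw [if_pos hlt]
    exact (sup_span_singleton_eq_of_finrank_le inf_le_left hP hxP fun h => hxN h.2).symm
  · obtain ⟨x, hxM, hxN⟩ := SetLike.not_le_iff_exists.1 hMN
    refine ⟨x, hxM, hxN, ?_⟩
    rw [if_neg hlt, span_zero_singleton, sup_bot_eq]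
    exact (eq_of_le_of_finrank_le inf_le_left (not_lt.1 hlt)).symm

theorem exists_inf_sup_eq_sup_span_ite {W₁ W₂ W : Submodule K V}
    (hU₁ : finrank K ↥(W₁ ⊓ W₂) + 1 = finrank K W₁)
    (hU₂ : finrank K ↥(W₁ ⊓ W₂) + 1 = finrank K W₂) {a d₁ d₂ b : ℕ}
    (ha : finrank K ↥(W ⊓ W₁ ⊓ W₂) = a) (hd₁ : finrank K ↥(W ⊓ W₁) = d₁)
    (hd₂ : finrank K ↥(W ⊓ W₂) = d₂) (hb : finrank K ↥(W ⊓ (W₁ ⊔ W₂)) = b) :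
    ∃ x₁ x₂ : V, x₁ ∈ W₁ ∧ x₁ ∉ W₂ ∧ x₂ ∈ W₂ ∧ x₂ ∉ W₁ ∧
      W ⊓ (W₁ ⊔ W₂) = W ⊓ W₁ ⊓ W₂ ⊔ span K {if a < d₁ then x₁ else 0} ⊔
        span K {if a < d₂ then x₂ else 0} ⊔
        span K {if d₁ + d₂ < a + b then x₁ + x₂ else 0} := by
  have hbd := finrank_inf_bounds hU₁ hU₂ ha hd₁ hd₂ hb
  by_cases hdiag : d₁ + d₂ < a + b
  · -- here `d₁ = d₂ = a` and `b = a + 1`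
    have hQ : ¬ ((W ⊓ (W₁ ⊔ W₂) : Submodule K V) : Set V) ⊆ W₁ ∪ W₂ := by
      rw [AddSubgroupClass.subset_union]
      rintro (h | h)
      · have := finrank_mono (le_inf inf_le_left h : W ⊓ (W₁ ⊔ W₂) ≤ W ⊓ W₁)
        omega
      · have := finrank_mono (le_inf inf_le_left h : W ⊓ (W₁ ⊔ W₂) ≤ W ⊓ W₂)
        omega
    obtain ⟨z, hzQ, hz⟩ := not_subset.1 hQ
    rw [mem_union, not_or] at hz
    obtain ⟨x₁, hx₁, x₂, hx₂, rfl⟩ := mem_sup.1 (mem_inf.1 hzQ).2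
    refine ⟨x₁, x₂, hx₁, fun h => hz.2 (add_mem h hx₂), hx₂, fun h => hz.1 (add_mem hx₁ h), ?_⟩
    rw [if_neg (by omega), if_neg (by omega), if_pos hdiag, span_zero_singleton, sup_bot_eq,
      sup_bot_eq]
    refine (sup_span_singleton_eq_of_finrank_le ?_ (by omega) hzQ
      fun h => hz.1 (mem_inf.1 (mem_inf.1 h).1).2).symm
    exact le_inf (inf_le_left.trans inf_le_left)
      (inf_le_left.trans (inf_le_right.trans le_sup_left))
  · have h₁₂ : ¬ W₁ ≤ W₂ := fun h => by rw [inf_eq_left.2 h] at hU₁; omega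
    have h₂₁ : ¬ W₂ ≤ W₁ := fun h => by rw [inf_eq_right.2 h] at hU₂; omega
    obtain ⟨x₁, hx₁, hx₁', hP₁⟩ :=
      exists_notMem_eq_inf_sup_span_ite (inf_le_right : W ⊓ W₁ ≤ W₁) h₁₂ (by omega)
    obtain ⟨x₂, hx₂, hx₂', hP₂⟩ :=
      exists_notMem_eq_inf_sup_span_ite (inf_le_right : W ⊓ W₂ ≤ W₂) h₂₁
        (by rw [inf_right_comm]; omega)
    rw [ha, hd₁] at hP₁
    rw [inf_right_comm, ha, hd₂] at hP₂
    refine ⟨x₁, x₂, hx₁, hx₁', hx₂, hx₂', ?_⟩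
    have hQ : W ⊓ W₁ ⊔ W ⊓ W₂ = W ⊓ (W₁ ⊔ W₂) := by
      refine eq_of_le_of_finrank_le le_inf_sup ?_
      have := finrank_inf_sup_inf_add_finrank_inf W W₁ W₂
      omega
    rw [if_neg hdiag, span_zero_singleton, sup_bot_eq, ← hQ, sup_assoc, sup_sup_distrib_left,
      ← hP₁, ← hP₂]

theorem exists_adapted_family {W₁ W₂ W : Submodule K V}
    (hU₁ : finrank K ↥(W₁ ⊓ W₂) + 1 = finrank K W₁)
    (hU₂ : finrank K ↥(W₁ ⊓ W₂) + 1 = finrank K W₂) {a d₁ d₂ b l c : ℕ}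
    (ha : finrank K ↥(W ⊓ W₁ ⊓ W₂) = a) (hd₁ : finrank K ↥(W ⊓ W₁) = d₁)
    (hd₂ : finrank K ↥(W ⊓ W₂) = d₂) (hb : finrank K ↥(W ⊓ (W₁ ⊔ W₂)) = b)
    (hl : a + l = finrank K ↥(W₁ ⊓ W₂)) (hc : b + c = finrank K W) :
    ∃ (u : Fin a → V) (u' : Fin l → V) (x₁ x₂ : V) (y : Fin c → V),
      LinearIndependent K (Sum.elim (Sum.elim u u') (Sum.elim ![x₁, x₂] y)) ∧
      W₁ = span K (range u) ⊔ span K (range u') ⊔ span K {x₁} ∧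
      W₂ = span K (range u) ⊔ span K (range u') ⊔ span K {x₂} ∧
      W = span K (range u) ⊔ span K {if a < d₁ then x₁ else 0} ⊔
        span K {if a < d₂ then x₂ else 0} ⊔
        span K {if d₁ + d₂ < a + b then x₁ + x₂ else 0} ⊔ span K (range y) := by
  obtain ⟨x₁, x₂, hx₁, hx₁', hx₂, hx₂', hQ⟩ :=
    exists_inf_sup_eq_sup_span_ite hU₁ hU₂ ha hd₁ hd₂ hb
  obtain ⟨u, hu⟩ := exists_sup_span_range_eq (bot_le : ⊥ ≤ W ⊓ W₁ ⊓ W₂)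
    (by rw [finrank_bot, ha, zero_add])
  rw [bot_sup_eq] at hu
  obtain ⟨u', hu'⟩ := exists_sup_span_range_eq
    (inf_le_inf_right W₂ inf_le_right : W ⊓ W₁ ⊓ W₂ ≤ W₁ ⊓ W₂) (by rw [ha, hl])
  obtain ⟨y, hy⟩ := exists_sup_span_range_eq (inf_le_left : W ⊓ (W₁ ⊔ W₂) ≤ W)
    (by rw [hb, hc])
  have hU : span K (range u) ⊔ span K (range u') = W₁ ⊓ W₂ := by rw [hu, hu']
  have hW₁ := sup_span_singleton_eq_of_finrank_le inf_le_left hU₁.ge hx₁ fun h => hx₁' h.2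
  have hW₂ := sup_span_singleton_eq_of_finrank_le inf_le_right hU₂.ge hx₂ fun h => hx₂' h.1
  refine ⟨u, u', x₁, x₂, y, ?_, by rw [hU, hW₁], by rw [hU, hW₂], ?_⟩
  · -- the family spans `W₁ ⊔ W₂ ⊔ W`, whose dimension is the length of the family
    have hspan : span K (range (Sum.elim (Sum.elim u u') (Sum.elim ![x₁, x₂] y))) =
        W₁ ⊔ W₂ ⊔ W := by
      rw [Sum.elim_range, Sum.elim_range, Sum.elim_range, span_union, span_union, span_union,
        Matrix.range_cons_cons_empty, span_insert, hU, ← sup_assoc, sup_sup_distrib_left, hW₁,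
        hW₂, ← hy, ← sup_assoc, sup_eq_left.2 (inf_le_right : W ⊓ (W₁ ⊔ W₂) ≤ W₁ ⊔ W₂)]
    rw [linearIndependent_iff_card_eq_finrank_span, Set.finrank, hspan]
    have := finrank_sup_add_finrank_inf_eq (W₁ ⊔ W₂) W
    rw [inf_comm, hb, finrank_sup_eq_finrank_add_one hU₂] at this
    simp only [Fintype.card_sum, Fintype.card_fin]
    omega
  · conv_lhs => rw [← hy, hQ, ← hu]

theorem exists_linearEquiv_map_eq_of_finrank_inf_eq {W₁ W₂ W W₁' W₂' W' : Submodule K V}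
    (hU₁ : finrank K ↥(W₁ ⊓ W₂) + 1 = finrank K W₁)
    (hU₂ : finrank K ↥(W₁ ⊓ W₂) + 1 = finrank K W₂)
    (hU₁' : finrank K ↥(W₁' ⊓ W₂') + 1 = finrank K W₁')
    (hU₂' : finrank K ↥(W₁' ⊓ W₂') + 1 = finrank K W₂')
    (hU : finrank K ↥(W₁ ⊓ W₂) = finrank K ↥(W₁' ⊓ W₂')) (hW : finrank K W = finrank K W')
    (ha : finrank K ↥(W ⊓ W₁ ⊓ W₂) = finrank K ↥(W' ⊓ W₁' ⊓ W₂'))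
    (hd₁ : finrank K ↥(W ⊓ W₁) = finrank K ↥(W' ⊓ W₁'))
    (hd₂ : finrank K ↥(W ⊓ W₂) = finrank K ↥(W' ⊓ W₂'))
    (hb : finrank K ↥(W ⊓ (W₁ ⊔ W₂)) = finrank K ↥(W' ⊓ (W₁' ⊔ W₂'))) :
    ∃ g : V ≃ₗ[K] V, W₁.map g.toLinearMap = W₁' ∧ W₂.map g.toLinearMap = W₂' ∧
      W.map g.toLinearMap = W' := by
  have hl := Nat.add_sub_cancel'
    (finrank_mono (inf_le_inf_right W₂ inf_le_right : W ⊓ W₁ ⊓ W₂ ≤ W₁ ⊓ W₂))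
  have hc := Nat.add_sub_cancel' (finrank_mono (inf_le_left : W ⊓ (W₁ ⊔ W₂) ≤ W))
  obtain ⟨u, u', x₁, x₂, y, hv, h₁, h₂, h⟩ :=
    exists_adapted_family hU₁ hU₂ rfl rfl rfl rfl hl hc
  obtain ⟨w, w', z₁, z₂, t, hw, h₁', h₂', h'⟩ :=
    exists_adapted_family hU₁' hU₂' ha.symm hd₁.symm hd₂.symm hb.symm
      (by rw [← hU]; exact hl) (by rw [← hW]; exact hc)
  obtain ⟨g, hg⟩ := hv.exists_linearEquiv_apply_eq hw
  have hu : ⇑g ∘ u = w := funext fun i => hg (.inl (.inl i))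
  have hu' : ⇑g ∘ u' = w' := funext fun i => hg (.inl (.inr i))
  have hx₁ : g x₁ = z₁ := hg (.inr (.inl 0))
  have hx₂ : g x₂ = z₂ := hg (.inr (.inl 1))
  have hy : ⇑g ∘ y = t := funext fun i => hg (.inr (.inr i))
  refine ⟨g, ?_, ?_, ?_⟩ <;> [rw [h₁, h₁']; rw [h₂, h₂']; rw [h, h']] <;>
    simp only [Submodule.map_sup, map_span, image_singleton, ← range_comp, LinearEquiv.coe_coe,
      apply_ite, map_add, map_zero, hu, hu', hx₁, hx₂, hy]

end Submodule

theorem stmt11_general (k m : ℕ)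
    (W1 W2 W3 W4 : Submodule ℝ (Fin m → ℝ))
    (hW1 : Module.finrank ℝ W1 = k) (hW2 : Module.finrank ℝ W2 = k)
    (hW3 : Module.finrank ℝ W3 = k) (hW4 : Module.finrank ℝ W4 = k)
    (hint : Module.finrank ℝ ↥(W1 ⊓ W2) = k - 1) :
    (∃ g : (Fin m → ℝ) ≃ₗ[ℝ] (Fin m → ℝ),
        ((W1.map g.toLinearMap = W1 ∧ W2.map g.toLinearMap = W2) ∨ (W1.map g.toLinearMap = W2 ∧ W2.map g.toLinearMap = W1)) ∧
        W3.map g.toLinearMap = W4)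
      ↔ (Module.finrank ℝ ↥(W3 ⊓ W1 ⊓ W2) = Module.finrank ℝ ↥(W4 ⊓ W1 ⊓ W2) ∧
          Module.finrank ℝ ↥(W3 ⊓ (W1 ⊔ W2)) = Module.finrank ℝ ↥(W4 ⊓ (W1 ⊔ W2)) ∧
          max (Module.finrank ℝ ↥(W3 ⊓ W1)) (Module.finrank ℝ ↥(W3 ⊓ W2)) =
            max (Module.finrank ℝ ↥(W4 ⊓ W1)) (Module.finrank ℝ ↥(W4 ⊓ W2))) := by
  constructor
  · rintro ⟨g, ⟨h₁, h₂⟩ | ⟨h₁, h₂⟩, h⟩ <;>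
      obtain ⟨ha, hd₁, hd₂, hb⟩ := finrank_inf_eq_of_map_eq g h₁ h₂ h
    · exact ⟨ha.symm, hb.symm, by rw [hd₁, hd₂]⟩
    · rw [inf_right_comm] at ha
      rw [sup_comm] at hb
      exact ⟨ha.symm, hb.symm, by rw [hd₁, hd₂, max_comm]⟩
  · rintro ⟨ha, hb, hd⟩
    obtain rfl | hk := Nat.eq_zero_or_pos k
    · rw [finrank_eq_zero] at hW3 hW4
      exact ⟨LinearEquiv.refl ℝ _, Or.inl ⟨by simp, by simp⟩, by simp [hW3, hW4]⟩
    have hU₁ : finrank ℝ ↥(W1 ⊓ W2) + 1 = finrank ℝ W1 := by omega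
    have hU₂ : finrank ℝ ↥(W1 ⊓ W2) + 1 = finrank ℝ W2 := by omega
    have hW : finrank ℝ W3 = finrank ℝ W4 := hW3.trans hW4.symm
    obtain ⟨hd₁, hd₂⟩ | ⟨hd₁, hd₂⟩ := finrank_inf_eq_or_eq_swap_of_max_eq hU₁ hU₂ ha hb hd
    · obtain ⟨g, h₁, h₂, h⟩ :=
        exists_linearEquiv_map_eq_of_finrank_inf_eq hU₁ hU₂ hU₁ hU₂ rfl hW ha hd₁ hd₂ hb
      exact ⟨g, Or.inl ⟨h₁, h₂⟩, h⟩
    · have hU₁' : finrank ℝ ↥(W2 ⊓ W1) + 1 = finrank ℝ W2 := by rwa [inf_comm]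
      have hU₂' : finrank ℝ ↥(W2 ⊓ W1) + 1 = finrank ℝ W1 := by rwa [inf_comm]
      obtain ⟨g, h₁, h₂, h⟩ := exists_linearEquiv_map_eq_of_finrank_inf_eq hU₁ hU₂ hU₁' hU₂'
        (by rw [inf_comm]) hW (by rwa [inf_right_comm W4]) hd₁ hd₂ (by rwa [sup_comm W2])
      exact ⟨g, Or.inr ⟨h₁, h₂⟩, h⟩

theorem stmt11 (k m : ℕ)
    (W1 W2 W3 W4 : Submodule ℝ (Fin m → ℝ))
    (hW1 : Module.finrank ℝ W1 = k) (hW2 : Module.finrank ℝ W2 = k)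
    (hW3 : Module.finrank ℝ W3 = k) (hW4 : Module.finrank ℝ W4 = k)
    (hint : Module.finrank ℝ ↥(W1 ⊓ W2) = k - 1)
    (h31 : W3 ≠ W1) (h32 : W3 ≠ W2) (h41 : W4 ≠ W1) (h42 : W4 ≠ W2) :
    (∃ g : (Fin m → ℝ) ≃ₗ[ℝ] (Fin m → ℝ),
        ((W1.map g.toLinearMap = W1 ∧ W2.map g.toLinearMap = W2) ∨ (W1.map g.toLinearMap = W2 ∧ W2.map g.toLinearMap = W1)) ∧
        W3.map g.toLinearMap = W4)
      ↔ (Module.finrank ℝ ↥(W3 ⊓ W1 ⊓ W2) = Module.finrank ℝ ↥(W4 ⊓ W1 ⊓ W2) ∧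
          Module.finrank ℝ ↥(W3 ⊓ (W1 ⊔ W2)) = Module.finrank ℝ ↥(W4 ⊓ (W1 ⊔ W2)) ∧
          max (Module.finrank ℝ ↥(W3 ⊓ W1)) (Module.finrank ℝ ↥(W3 ⊓ W2)) =
            max (Module.finrank ℝ ↥(W4 ⊓ W1)) (Module.finrank ℝ ↥(W4 ⊓ W2))) :=
  stmt11_general k m W1 W2 W3 W4 hW1 hW2 hW3 hW4 hint
end

section
/- Let W1, W2 be k-dimensional subspaces of ℝ^m (with 1 ≤ k and k+1 ≤ m, standard basis e_1,…,e_m). Then there exists g ∈ GL(m,ℝ) with g(W1) = span(e_1,…,e_k) and g(W2) = span(e_1,…,e_{k−1}, e_{k+1}) if and only if dim(W1 ∩ W2) = k − 1. -/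
/-- The span of the standard basis vectors `e_i` for `i ∈ S`. -/
def stdSpan (m : ℕ) (S : Set (Fin m)) : Submodule ℝ (Fin m → ℝ) :=
  Submodule.span ℝ ((fun i => (Pi.single i 1 : Fin m → ℝ)) '' S)

/-!
If `g` exists, it carries `W1 ⊓ W2` onto the intersection of the two coordinate subspaces, which
is spanned by `e_1, …, e_{k-1}`. Conversely, if `U = W1 ⊓ W2` has dimension `k - 1`, pick
`v₁ ∈ W1 \ W2` and `v₂ ∈ W2 \ W1`. Counting dimensions, `W1 = U ⊕ ⟨v₁⟩` and `W2 = U ⊕ ⟨v₂⟩`, so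
a basis of `U` followed by `v₁, v₂` is linearly independent. Extend it to a basis `b` of `ℝ^m`,
placing `v₁` at index `k - 1` and `v₂` at index `k`; the coordinate map of `b` is the required `g`.
-/

open Module Submodule Set

section

variable {ι K V : Type*} [DivisionRing K] [AddCommGroup V] [Module K V]

theorem LinearIndepOn.finrank_span_image [Finite ι] {f : ι → V} {s : Set ι}
    (hf : LinearIndepOn K f s) : finrank K (span K (f '' s)) = s.ncard := by
  have := Fintype.ofFinite s
  rw [image_eq_range, finrank_span_eq_card hf, ← Nat.card_eq_fintype_card, Nat.card_coe_set_eq]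

theorem Submodule.exists_linearIndepOn_span_image_eq [Finite ι] (U : Submodule K V)
    [FiniteDimensional K U] {A : Set ι} (hA : A.ncard = finrank K U) :
    ∃ u : ι → V, LinearIndepOn K u A ∧ span K (u '' A) = U := by
  classical
  let b : Basis A K U :=
    (Module.finBasis K U).reindex (Finite.equivFinOfCardEq (by rwa [Nat.card_coe_set_eq])).symm
  let u : ι → V := fun i => if h : i ∈ A then (b ⟨i, h⟩ : V) else 0
  have hu : (fun i : A => u i) = U.subtype ∘ b := funext fun i => dif_pos i.2
  refine ⟨u, ?_, ?_⟩
  · rw [LinearIndepOn, hu]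
    exact b.linearIndependent.map' U.subtype U.ker_subtype
  · rw [image_eq_range, hu, range_comp, ← map_span, b.span_eq, map_subtype_top]

theorem LinearIndepOn.exists_basis_eqOn [Fintype ι] [FiniteDimensional K V] {f : ι → V}
    {s : Set ι} (hf : LinearIndepOn K f s) (hι : Fintype.card ι = finrank K V) :
    ∃ b : Basis ι K V, EqOn b f s := by
  classical
  obtain ⟨C, hC⟩ := (span K (f '' s)).exists_isCompl
  have hCrank : sᶜ.ncard = finrank K C := by
    have := finrank_add_eq_of_isCompl hC
    rw [hf.finrank_span_image, ← hι, ← Nat.card_eq_fintype_card, ← ncard_add_ncard_compl s] at this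
    omega
  obtain ⟨c, hc, hcspan⟩ := C.exists_linearIndepOn_span_image_eq hCrank
  have hw : LinearIndependent K (s.piecewise f c) := by
    rw [← linearIndepOn_univ_iff, ← union_compl_self s]
    refine LinearIndepOn.union (hf.congr (s.piecewise_eqOn f c).symm)
      (hc.congr (s.piecewise_eqOn_compl f c).symm) ?_
    rw [(s.piecewise_eqOn f c).image_eq, (s.piecewise_eqOn_compl f c).image_eq, hcspan]
    exact hC.disjoint
  refine ⟨basisOfLinearIndependentOfCardEqFinrank' _ hw hι, ?_⟩
  rw [coe_basisOfLinearIndependentOfCardEqFinrank']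
  exact s.piecewise_eqOn f c

theorem Submodule.exists_mem_notMem_of_finrank_inf_lt {W₁ W₂ : Submodule K V}
    (h : finrank K ↥(W₁ ⊓ W₂) < finrank K W₁) : ∃ v ∈ W₁, v ∉ W₂ := by
  by_contra! hle
  rw [inf_eq_left.mpr hle] at h
  exact h.false

theorem Submodule.sup_span_singleton_eq_of_finrank_eq_succ [FiniteDimensional K V]
    {U W : Submodule K V} (hUW : U ≤ W) {v : V} (hv : v ∈ W) (hvU : v ∉ U)
    (h : finrank K W = finrank K U + 1) : U ⊔ span K {v} = W :=
  eq_of_le_of_finrank_eq (sup_le hUW (span_singleton_le_iff_mem v W |>.mpr hv))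
    (by rw [finrank_sup_span_singleton hvU, h])

theorem exists_basis_span_image_insert_eq [Fintype ι] [FiniteDimensional K V]
    (hι : Fintype.card ι = finrank K V) {A : Set ι} {a₁ a₂ : ι} (ha₁ : a₁ ∉ A) (ha₂ : a₂ ∉ A)
    (ha : a₁ ≠ a₂) {W₁ W₂ : Submodule K V} (hinf : finrank K ↥(W₁ ⊓ W₂) = A.ncard)
    (hW₁ : finrank K W₁ = A.ncard + 1) (hW₂ : finrank K W₂ = A.ncard + 1) :
    ∃ b : Basis ι K V, span K (b '' insert a₁ A) = W₁ ∧ span K (b '' insert a₂ A) = W₂ := by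
  classical
  obtain ⟨u, hu, hspan⟩ := (W₁ ⊓ W₂).exists_linearIndepOn_span_image_eq hinf.symm
  obtain ⟨v₁, hv₁, hv₁W₂⟩ :=
    exists_mem_notMem_of_finrank_inf_lt (W₁ := W₁) (W₂ := W₂) (by omega)
  obtain ⟨v₂, hv₂, hv₂W₁⟩ :=
    exists_mem_notMem_of_finrank_inf_lt (W₁ := W₂) (W₂ := W₁) (by rw [inf_comm]; omega)
  have hv₁U : v₁ ∉ W₁ ⊓ W₂ := fun h => hv₁W₂ h.2
  have hv₂U : v₂ ∉ W₁ ⊓ W₂ := fun h => hv₂W₁ h.1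
  set f := Function.update (Function.update u a₁ v₁) a₂ v₂
  have hfA : EqOn f u A := fun i hi => by
    simp [f, ne_of_mem_of_not_mem hi ha₁, ne_of_mem_of_not_mem hi ha₂]
  have hspanA : span K (f '' A) = W₁ ⊓ W₂ := by rw [hfA.image_eq, hspan]
  have hspan₁ : span K (f '' insert a₁ A) = W₁ := by
    rw [image_insert_eq, span_insert, hspanA, sup_comm]
    simpa [f, ha] using
      sup_span_singleton_eq_of_finrank_eq_succ inf_le_left hv₁ hv₁U (by rw [hinf, hW₁])
  have hspan₂ : span K (f '' insert a₂ A) = W₂ := by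
    rw [image_insert_eq, span_insert, hspanA, sup_comm]
    simpa [f] using
      sup_span_singleton_eq_of_finrank_eq_succ inf_le_right hv₂ hv₂U (by rw [hinf, hW₂])
  have hli : LinearIndepOn K f (insert a₂ (insert a₁ A)) := by
    refine ((hu.congr hfA.symm).insert ?_).insert ?_
    · simpa [hspanA, f, ha] using hv₁U
    · simpa [hspan₁, f] using hv₂W₁
  obtain ⟨b, hb⟩ := hli.exists_basis_eqOn hι
  exact ⟨b, by rw [(hb.mono (subset_insert _ _)).image_eq, hspan₁],
    by rw [(hb.mono (insert_subset_insert (subset_insert _ _))).image_eq, hspan₂]⟩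

end

theorem Pi.spanSubset_inf {R η : Type*} [CommSemiring R] [Finite η] (s t : Set η) :
    Pi.spanSubset R s ⊓ Pi.spanSubset R t = Pi.spanSubset R (s ∩ t) := by
  ext v
  simp only [mem_inf, Pi.mem_spanSubset_iff, mem_inter_iff, not_and_or]
  grind

theorem Module.Basis.map_equivFun_span_image {ι K V : Type*} [Finite ι] [CommRing K]
    [AddCommGroup V] [Module K V] (b : Basis ι K V) (s : Set ι) :
    (span K (b '' s)).map b.equivFun.toLinearMap = Pi.spanSubset K s := by
  classical
  rw [map_span, image_image, Pi.spanSubset]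
  congr 1
  refine image_congr fun i _ => ?_
  ext j
  simp [Pi.single_apply, eq_comm]

theorem stdSpan_eq_spanSubset (m : ℕ) (S : Set (Fin m)) : stdSpan m S = Pi.spanSubset ℝ S := by
  simp [stdSpan, Pi.spanSubset]

theorem Fin.ncard_setOf_val_lt {m n : ℕ} (h : n ≤ m) : {i : Fin m | (i : ℕ) < n}.ncard = n := by
  have : {i : Fin m | (i : ℕ) < n} = range (Fin.castLE h) := by
    ext i; exact ⟨fun hi => ⟨⟨i, hi⟩, rfl⟩, by rintro ⟨j, rfl⟩; exact j.2⟩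
  rw [this, ncard_range_of_injective (Fin.castLE_injective h), Nat.card_eq_fintype_card,
    Fintype.card_fin]

theorem stmt13 (k m : ℕ) (hk : 1 ≤ k) (hkm : k + 1 ≤ m)
    (W1 W2 : Submodule ℝ (Fin m → ℝ))
    (hW1 : Module.finrank ℝ W1 = k) (hW2 : Module.finrank ℝ W2 = k) :
    (∃ g : (Fin m → ℝ) ≃ₗ[ℝ] (Fin m → ℝ),
        -- `g(W1) = span(e_1, …, e_k)`
        W1.map g.toLinearMap = stdSpan m {i : Fin m | (i : ℕ) < k} ∧
        -- `g(W2) = span(e_1, …, e_{k-1}, e_{k+1})`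
        W2.map g.toLinearMap = stdSpan m ({i : Fin m | (i : ℕ) < k - 1} ∪ {(⟨k, by omega⟩ : Fin m)}))
      ↔ Module.finrank ℝ ↥(W1 ⊓ W2) = k - 1 := by
  have hA : {i : Fin m | (i : ℕ) < k - 1}.ncard = k - 1 := Fin.ncard_setOf_val_lt (by omega)
  have hlt :
      {i : Fin m | (i : ℕ) < k} = insert ⟨k - 1, by omega⟩ {i : Fin m | (i : ℕ) < k - 1} := by
    ext i; simp [Fin.ext_iff]; omega
  constructor
  · rintro ⟨g, h₁, h₂⟩
    have hinter : {i : Fin m | (i : ℕ) < k} ∩ ({i | (i : ℕ) < k - 1} ∪ {⟨k, by omega⟩}) =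
        {i : Fin m | (i : ℕ) < k - 1} := by
      ext i; simp [Fin.ext_iff]; omega
    rw [← g.finrank_map_eq, map_inf _ g.injective, h₁, h₂, stdSpan_eq_spanSubset,
      stdSpan_eq_spanSubset, Pi.spanSubset_inf, Pi.dim_spanSubset, hinter, hA]
  · intro h
    obtain ⟨b, hb₁, hb₂⟩ := exists_basis_span_image_insert_eq (W₁ := W1) (W₂ := W2)
      (A := {i : Fin m | (i : ℕ) < k - 1}) (a₁ := ⟨k - 1, by omega⟩) (a₂ := ⟨k, by omega⟩)
      (by simp) (by simp) (by simp) (by simp [Fin.ext_iff]; omega) (by rw [h, hA])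
      (by rw [hA]; omega) (by rw [hA]; omega)
    refine ⟨b.equivFun, ?_, ?_⟩
    · rw [stdSpan_eq_spanSubset, hlt, ← b.map_equivFun_span_image, hb₁]
    · rw [stdSpan_eq_spanSubset, union_singleton, ← b.map_equivFun_span_image, hb₂]
end

section
/- Let W be a Lagrangian subspace of ℝ^{2m} with its standard symplectic form Ω. An element g ∈ GL(2m,ℝ) is a Lagrangian symmetry at W (i.e., there exists c ≠ 0 with g w = c w for all w ∈ W and Ω(g x, g y) = −c²·Ω(x,y) for all x,y) if and only if there exist c ≠ 0 and a linear map P : ℝ^{2m} → ℝ^{2m} with P ∘ P = P, range(P) = W, and kernel(P) a Lagrangian subspace, such that g = c·(2P − I). In particular, Lagrangian symmetries exist at every Lagrangian subspace W. -/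
/-!
If `g` is a Lagrangian symmetry with constant `c`, then `Ω(w, g y + c y) = 0` for `w ∈ W`, so
`g y + c y` lies in `W^Ω = W`. Hence `P = (2c)⁻¹ (g + c)` is a projection onto `W`, and
`g = c (2P - 1)`. Its kernel is the `(-c)`-eigenspace of `g`, which is isotropic because there
`Ω(g u, g v) = c² Ω(u, v)` must also equal `-c² Ω(u, v)`.

Conversely, writing `x = P x + (x - P x)` with both summands in Lagrangian subspaces, only the two
mixed terms of `Ω(x, y)` survive, and the reflection `2P - 1` flips the sign of each of them.

Lagrangian complements exist: with the complex structure `J`, `J W` is Lagrangian, and it is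
transverse to `W` because `Ω(x, J x) = |x|²`.
-/

open LinearMap (BilinForm ker range)

section Reflection

variable {R M : Type*} [CommRing R] [AddCommGroup M] [Module R M] {P : M →ₗ[R] M}

theorem LinearMap.two_smul_sub_id_apply (P : M →ₗ[R] M) (x : M) :
    ((2 : R) • P - LinearMap.id : M →ₗ[R] M) x = P x - (x - P x) := by
  rw [LinearMap.sub_apply, LinearMap.smul_apply, LinearMap.id_apply, two_smul]
  abel

theorem IsIdempotentElem.reflection_involutive (hP : IsIdempotentElem P) :
    Function.Involutive ((2 : R) • P - LinearMap.id : M →ₗ[R] M) := by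
  intro x
  have hPP : P (P x) = P x := LinearMap.congr_fun hP.eq x
  rw [LinearMap.two_smul_sub_id_apply P, LinearMap.two_smul_sub_id_apply P, map_sub, map_sub, hPP,
    sub_self, sub_zero]
  abel

theorem IsIdempotentElem.sub_apply_mem_ker (hP : IsIdempotentElem P) (x : M) :
    x - P x ∈ ker P := by
  rw [LinearMap.IsIdempotentElem.ker_eq_range hP]
  exact LinearMap.mem_range_self _ x

theorem LinearMap.BilinForm.apply_reflection_apply_reflection (B : BilinForm R M)
    (hP : IsIdempotentElem P) (hrange : ∀ x ∈ range P, ∀ y ∈ range P, B x y = 0)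
    (hker : ∀ x ∈ ker P, ∀ y ∈ ker P, B x y = 0) (x y : M) :
    B (((2 : R) • P - LinearMap.id : M →ₗ[R] M) x)
      (((2 : R) • P - LinearMap.id : M →ₗ[R] M) y) = -B x y := by
  have hsplit : ∀ a ∈ range P, ∀ b ∈ range P, ∀ a' ∈ ker P, ∀ b' ∈ ker P,
      B (a - a') (b - b') = -B (a + a') (b + b') := by
    intro a ha b hb a' ha' b' hb'
    simp only [map_sub, map_add, LinearMap.sub_apply, LinearMap.add_apply, hrange a ha b hb,
      hker a' ha' b' hb']
    ring
  rw [LinearMap.two_smul_sub_id_apply P, LinearMap.two_smul_sub_id_apply P,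
    hsplit _ (LinearMap.mem_range_self P x) _ (LinearMap.mem_range_self P y) _
      (hP.sub_apply_mem_ker x) _ (hP.sub_apply_mem_ker y),
    add_sub_cancel, add_sub_cancel]

theorem LinearMap.BilinForm.apply_smul_reflection_apply_smul_reflection (B : BilinForm R M)
    (hP : IsIdempotentElem P) (hrange : ∀ x ∈ range P, ∀ y ∈ range P, B x y = 0)
    (hker : ∀ x ∈ ker P, ∀ y ∈ ker P, B x y = 0) (c : R) (x y : M) :
    B ((c • ((2 : R) • P - LinearMap.id) : M →ₗ[R] M) x)
      ((c • ((2 : R) • P - LinearMap.id) : M →ₗ[R] M) y) =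
      -c ^ 2 * B x y := by
  rw [LinearMap.smul_apply, LinearMap.smul_apply, map_smul, map_smul, LinearMap.smul_apply,
    B.apply_reflection_apply_reflection hP hrange hker, smul_eq_mul, smul_eq_mul]
  ring

end Reflection

namespace LinearMap.BilinForm

variable {K M : Type*} [Field K] [AddCommGroup M] [Module K M]
  {B : BilinForm K M} {W : Submodule K M} {g : M →ₗ[K] M} {c : K}

theorem add_smul_mem_orthogonal (hc : c ≠ 0) (hgW : ∀ w ∈ W, g w = c • w)
    (hgB : ∀ x y, B (g x) (g y) = -c ^ 2 * B x y) (y : M) :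
    g y + c • y ∈ B.orthogonal W := by
  rw [mem_orthogonal_iff]
  intro w hw
  have hw' : c * B w (g y) = -c ^ 2 * B w y := by
    rw [← hgB, hgW w hw, map_smul, smul_apply, smul_eq_mul]
  have : B w (g y) = -c * B w y := mul_left_cancel₀ hc (by rw [hw']; ring)
  change B w (g y + c • y) = 0
  rw [map_add, map_smul, this, smul_eq_mul]
  ring

theorem apply_eq_zero_of_apply_eq_neg_smul [NeZero (2 : K)] (hc : c ≠ 0)
    (hgB : ∀ x y, B (g x) (g y) = -c ^ 2 * B x y) {u v : M}
    (hu : g u = -c • u) (hv : g v = -c • v) : B u v = 0 := by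
  have h := hgB u v
  rw [hu, hv, map_smul, map_smul, smul_apply, smul_eq_mul, smul_eq_mul] at h
  have h2c : (2 : K) * c ^ 2 ≠ 0 := mul_ne_zero two_ne_zero (pow_ne_zero 2 hc)
  exact (mul_eq_zero.1 (by linear_combination h : (2 : K) * c ^ 2 * B u v = 0)).resolve_left h2c

theorem exists_isProj_eq_smul_reflection [NeZero (2 : K)] (hW : B.orthogonal W ≤ W) (hc : c ≠ 0)
    (hgW : ∀ w ∈ W, g w = c • w) (hgB : ∀ x y, B (g x) (g y) = -c ^ 2 * B x y) :
    ∃ P : M →ₗ[K] M, IsProj W P ∧ (∀ u ∈ ker P, ∀ v ∈ ker P, B u v = 0) ∧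
      g = c • ((2 : K) • P - LinearMap.id) := by
  set P : M →ₗ[K] M := (2 * c)⁻¹ • (g + c • LinearMap.id) with hPdef
  have hPx : ∀ x, P x = (2 * c)⁻¹ • (g x + c • x) := fun x => rfl
  have hker : ∀ u ∈ ker P, g u = -c • u := by
    intro u hu
    rw [mem_ker, hPx, smul_eq_zero, or_iff_right (inv_ne_zero (mul_ne_zero two_ne_zero hc))] at hu
    rw [neg_smul, eq_neg_of_add_eq_zero_left hu]
  refine ⟨P, ⟨fun x => ?_, fun w hw => ?_⟩, fun u hu v hv => ?_, ?_⟩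
  · exact W.smul_mem _ (hW (add_smul_mem_orthogonal hc hgW hgB x))
  · rw [hPx, hgW w hw, ← two_smul K, smul_smul, smul_smul]
    field_simp
    rw [one_smul]
  · exact apply_eq_zero_of_apply_eq_neg_smul hc hgB (hker u hu) (hker v hv)
  · ext x
    rw [LinearMap.smul_apply, hPdef]
    simp only [LinearMap.sub_apply, LinearMap.smul_apply, LinearMap.add_apply,
      LinearMap.id_apply, smul_smul]
    rw [show (2 : K) * (2 * c)⁻¹ = c⁻¹ by field_simp, smul_sub, smul_smul, mul_inv_cancel₀ hc,
      one_smul, add_sub_cancel_right]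

end LinearMap.BilinForm

namespace Omega

variable {m : ℕ}

def fstIdx (i : Fin m) : Fin (2 * m) := ⟨i.1, by have := i.2; omega⟩

def sndIdx (i : Fin m) : Fin (2 * m) := ⟨m + i.1, by have := i.2; omega⟩

theorem fstIdx_or_sndIdx (j : Fin (2 * m)) : (∃ i, j = fstIdx i) ∨ ∃ i, j = sndIdx i := by
  by_cases h : j.1 < m
  · exact Or.inl ⟨⟨j.1, h⟩, rfl⟩
  · exact Or.inr ⟨⟨j.1 - m, by omega⟩, Fin.ext (by simp only [sndIdx]; omega)⟩

theorem eq_sum (x y : Fin (2 * m) → ℝ) :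
    Omega m x y = ∑ i : Fin m, (x (fstIdx i) * y (sndIdx i) - x (sndIdx i) * y (fstIdx i)) :=
  rfl

def form (m : ℕ) : BilinForm ℝ (Fin (2 * m) → ℝ) :=
  LinearMap.mk₂ ℝ (Omega m)
    (fun x x' y => by
      simp only [eq_sum, Pi.add_apply, ← Finset.sum_add_distrib]
      exact Finset.sum_congr rfl fun _ _ => by ring)
    (fun a x y => by
      simp only [eq_sum, Pi.smul_apply, smul_eq_mul, Finset.mul_sum]
      exact Finset.sum_congr rfl fun _ _ => by ring)
    (fun x y y' => by
      simp only [eq_sum, Pi.add_apply, ← Finset.sum_add_distrib]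
      exact Finset.sum_congr rfl fun _ _ => by ring)
    (fun a x y => by
      simp only [eq_sum, Pi.smul_apply, smul_eq_mul, Finset.mul_sum]
      exact Finset.sum_congr rfl fun _ _ => by ring)

/-- The standard complex structure `J (q, p) = (-p, q)`. -/
def J (m : ℕ) : (Fin (2 * m) → ℝ) →ₗ[ℝ] Fin (2 * m) → ℝ where
  toFun x j := if h : j.1 < m then -x ⟨m + j.1, by omega⟩ else x ⟨j.1 - m, by omega⟩
  map_add' x y := by funext j; by_cases h : j.1 < m <;> simp [h, add_comm]
  map_smul' a x := by funext j; by_cases h : j.1 < m <;> simp [h]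

theorem J_apply_fstIdx (x : Fin (2 * m) → ℝ) (i : Fin m) : J m x (fstIdx i) = -x (sndIdx i) :=
  dif_pos i.2

theorem J_apply_sndIdx (x : Fin (2 * m) → ℝ) (i : Fin m) : J m x (sndIdx i) = x (fstIdx i) := by
  simp [J, sndIdx, fstIdx]

theorem apply_J_apply_J (x y : Fin (2 * m) → ℝ) : Omega m (J m x) (J m y) = Omega m x y := by
  simp only [eq_sum, J_apply_fstIdx, J_apply_sndIdx]
  exact Finset.sum_congr rfl fun _ _ => by ring

theorem apply_J_self (x : Fin (2 * m) → ℝ) :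
    Omega m x (J m x) = ∑ i : Fin m, (x (fstIdx i) ^ 2 + x (sndIdx i) ^ 2) := by
  simp only [eq_sum, J_apply_fstIdx, J_apply_sndIdx]
  exact Finset.sum_congr rfl fun _ _ => by ring

theorem eq_zero_of_apply_J_self_eq_zero {x : Fin (2 * m) → ℝ} (h : Omega m x (J m x) = 0) :
    x = 0 := by
  rw [apply_J_self, Finset.sum_eq_zero_iff_of_nonneg fun _ _ => by positivity] at h
  have hx : ∀ i, x (fstIdx i) = 0 ∧ x (sndIdx i) = 0 := fun i => by
    have := h i (Finset.mem_univ i)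
    constructor <;> nlinarith [sq_nonneg (x (fstIdx i)), sq_nonneg (x (sndIdx i))]
  funext j
  rcases fstIdx_or_sndIdx j with ⟨i, rfl⟩ | ⟨i, rfl⟩
  exacts [(hx i).1, (hx i).2]

theorem J_injective : Function.Injective (J m) := by
  refine (injective_iff_map_eq_zero _).2 fun x hx => eq_zero_of_apply_J_self_eq_zero ?_
  rw [hx]
  exact Finset.sum_eq_zero fun _ _ => by simp

theorem form_isAlt : (form m).IsAlt := fun x =>
  (eq_sum x x).trans (Finset.sum_eq_zero fun _ _ => by ring)

theorem form_nondegenerate : (form m).Nondegenerate :=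
  form_isAlt.isRefl.nondegenerate_iff_separatingLeft.2 fun x hx =>
    eq_zero_of_apply_J_self_eq_zero (hx (J m x))

end Omega

namespace IsLagrangian

open Module

variable {m : ℕ} {W W' : Submodule ℝ (Fin (2 * m) → ℝ)}

theorem orthogonal_eq (hW : IsLagrangian m W) : (Omega.form m).orthogonal W = W := by
  refine (Submodule.eq_of_le_of_finrank_le (fun w hw => ?_) ?_).symm
  · exact (BilinForm.mem_orthogonal_iff).2 fun x hx => hW.2 x hx w hw
  · rw [BilinForm.finrank_orthogonal Omega.form_nondegenerate, finrank_fin_fun, hW.1]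
    omega

theorem of_isCompl (hW : IsLagrangian m W) (hWW' : IsCompl W W')
    (hW' : ∀ x ∈ W', ∀ y ∈ W', Omega m x y = 0) : IsLagrangian m W' := by
  refine ⟨?_, hW'⟩
  have := Submodule.finrank_add_eq_of_isCompl hWW'
  rw [finrank_fin_fun, hW.1] at this
  omega

theorem exists_isCompl (hW : IsLagrangian m W) : ∃ W', IsLagrangian m W' ∧ IsCompl W W' := by
  have hJW : finrank ℝ (W.map (Omega.J m)) = m :=
    (LinearEquiv.finrank_eq (Submodule.equivMapOfInjective _ Omega.J_injective W)).symm.trans hW.1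
  have hdisj : Disjoint W (W.map (Omega.J m)) := by
    refine Submodule.disjoint_def.2 ?_
    rintro _ hx ⟨a, ha, rfl⟩
    rw [Omega.eq_zero_of_apply_J_self_eq_zero (hW.2 a ha _ hx), map_zero]
  have hcompl : IsCompl W (W.map (Omega.J m)) :=
    (Submodule.isCompl_iff_disjoint _ _ (by rw [finrank_fin_fun, hW.1, hJW]; omega)).2 hdisj
  refine ⟨_, hW.of_isCompl hcompl ?_, hcompl⟩
  rintro _ ⟨a, ha, rfl⟩ _ ⟨b, hb, rfl⟩
  rw [Omega.apply_J_apply_J]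
  exact hW.2 a ha b hb

theorem lagSym_iff (hW : IsLagrangian m W) (g : (Fin (2 * m) → ℝ) ≃ₗ[ℝ] (Fin (2 * m) → ℝ)) :
    LagSym m W g ↔ ∃ (c : ℝ) (P : (Fin (2 * m) → ℝ) →ₗ[ℝ] (Fin (2 * m) → ℝ)),
      c ≠ 0 ∧ P ∘ₗ P = P ∧ range P = W ∧ IsLagrangian m (ker P) ∧
      g.toLinearMap = c • ((2 : ℝ) • P - LinearMap.id) := by
  refine ⟨fun ⟨c, hc, hgW, hgΩ⟩ => ?_, fun ⟨c, P, hc, hP, hPW, hker, hg⟩ => ?_⟩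
  · obtain ⟨P, hP, hker, hg⟩ := BilinForm.exists_isProj_eq_smul_reflection
      (B := Omega.form m) hW.orthogonal_eq.le hc hgW hgΩ
    exact ⟨c, P, hc, hP.isIdempotentElem, hP.range, hW.of_isCompl hP.isCompl hker, hg⟩
  · have hgx : ∀ x, g x = (c • ((2 : ℝ) • P - LinearMap.id) : _ →ₗ[ℝ] _) x :=
      fun x => LinearMap.congr_fun hg x
    subst hPW
    refine ⟨c, hc, fun w hw => ?_, fun x y => ?_⟩
    · rw [hgx, LinearMap.smul_apply, LinearMap.two_smul_sub_id_apply,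
        (LinearMap.IsIdempotentElem.mem_range_iff hP).1 hw, sub_self, sub_zero]
    · rw [hgx, hgx]
      exact (Omega.form m).apply_smul_reflection_apply_smul_reflection hP hW.2 hker.2 c x y

end IsLagrangian

theorem stmt17 (m : ℕ)
    (W : Submodule ℝ (Fin (2 * m) → ℝ)) (hW : IsLagrangian m W) :
    (∀ g : (Fin (2 * m) → ℝ) ≃ₗ[ℝ] (Fin (2 * m) → ℝ),
        LagSym m W g ↔
          ∃ (c : ℝ) (P : (Fin (2 * m) → ℝ) →ₗ[ℝ] (Fin (2 * m) → ℝ)),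
            c ≠ 0 ∧ P ∘ₗ P = P ∧ LinearMap.range P = W ∧
            IsLagrangian m (LinearMap.ker P) ∧
            g.toLinearMap = c • ((2 : ℝ) • P - LinearMap.id)) ∧
    ∃ g : (Fin (2 * m) → ℝ) ≃ₗ[ℝ] (Fin (2 * m) → ℝ), LagSym m W g := by
  refine ⟨hW.lagSym_iff, ?_⟩
  obtain ⟨W', hW', hWW'⟩ := hW.exists_isCompl
  have hP := Submodule.isIdempotentElem_projection hWW'
  refine ⟨LinearEquiv.ofInvolutive _ hP.reflection_involutive, (hW.lagSym_iff _).2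
    ⟨1, _, one_ne_zero, hP, Submodule.range_projection hWW', ?_, (one_smul _ _).symm⟩⟩
  rwa [Submodule.ker_projection]
end
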